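/- arXiv:math/0407089 — 4 statements merged into one kernel-verified Lean document; each statement's English description precedes it below -/
import Mathlib

section
/- Every fully residually free group G is a torsion-free CSA group: G has no nontrivial elements of finite order, and every maximal abelian subgroup M of G is malnormal, i.e. g⁻¹Mg ∩ M = {1} for every g ∈ G outside M. -/
set_option linter.unusedSectionVars false

namespace FRFAux


open FreeGroup

variable {α : Type*} [DecidableEq α]

lemma reduce_cons_of_head {x : α × Bool} {L : List (α × Bool)} (hL : FreeGroup.reduce L = L)
    (h : ∀ y ∈ L.head?, ¬(x.1 = y.1 ∧ x.2 = !y.2)) : FreeGroup.reduce (x :: L) = x :: L := by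
  rw [reduce.cons, hL]
  cases L with
  | nil => rfl
  | cons y t =>
    have hy := h y (by simp)
    show (if x.1 = y.1 ∧ x.2 = !y.2 then t else x :: y :: t) = x :: y :: t
    rw [if_neg hy]

lemma reduced_tail {x : α × Bool} {L : List (α × Bool)} (h : FreeGroup.reduce (x :: L) = x :: L) :
    FreeGroup.reduce L = L := by
  have hlen : (FreeGroup.reduce L).length ≤ L.length :=
    (FreeGroup.Red.sublist reduce.red).length_le
  rw [reduce.cons] at h
  cases hr : FreeGroup.reduce L with
  | nil => rw [hr] at h
           injection h
  | cons y t =>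
    rw [hr] at h
    have h' : (if x.1 = y.1 ∧ x.2 = !y.2 then t else x :: y :: t) = x :: L := h
    split_ifs at h' with hc
    · exfalso
      have h1 := congrArg List.length h'
      rw [hr] at hlen
      simp at h1 hlen
      omega
    · injection h'



open FreeGroup

variable {α : Type*} [DecidableEq α]

lemma mk_singleton_false (i : α) : FreeGroup.mk [(i, false)] = (FreeGroup.of i)⁻¹ := by
  have : FreeGroup.of i = FreeGroup.mk [(i, true)] := rfl
  rw [this, inv_mk]
  simp [invRev]

lemma peel {z : FreeGroup α} {i : α} {b : Bool} {t : List (α × Bool)}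
    (h : z.toWord = (i, b) :: t) :
    ∃ u : FreeGroup α, z = FreeGroup.of i ^ (if b then (1:ℤ) else -1) * u ∧
      u.toWord = t := by
  have hred : FreeGroup.reduce ((i,b) :: t) = (i,b) :: t := by rw [← h]; exact reduce_toWord z
  have ht : FreeGroup.reduce t = t := reduced_tail hred
  refine ⟨FreeGroup.mk t, ?_, by rw [toWord_mk, ht]⟩
  have hz : z = FreeGroup.mk ((i,b) :: t) := by
    conv_lhs => rw [← mk_toWord (x := z), h]
  rw [hz, ← List.singleton_append, ← mul_mk]
  congr 1
  cases b with
  | true =>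
    have he : (if (true = true) then (1:ℤ) else -1) = 1 := rfl
    rw [he, zpow_one]; rfl
  | false =>
    have he : (if (false = true) then (1:ℤ) else -1) = -1 := rfl
    rw [he, zpow_neg, zpow_one, ← mk_singleton_false]

lemma toWord_of_mul {i : α} {b : Bool} {z : FreeGroup α}
    (hhead : ∀ y ∈ z.toWord.head?, ¬(i = y.1 ∧ b = !y.2)) :
    (FreeGroup.mk [(i, b)] * z).toWord = (i, b) :: z.toWord := by
  conv_lhs => rw [← mk_toWord (x := z), mul_mk]
  rw [List.singleton_append, toWord_mk]
  exact reduce_cons_of_head (reduce_toWord z) hhead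

theorem commute_of (i : α) : ∀ (n : ℕ) (z : FreeGroup α), z.toWord.length ≤ n →
    Commute z (FreeGroup.of i) → ∃ k : ℤ, z = FreeGroup.of i ^ k := by
  intro n
  induction n with
  | zero =>
    intro z hlen _
    refine ⟨0, ?_⟩
    rw [zpow_zero, ← toWord_eq_nil_iff]
    exact List.eq_nil_of_length_eq_zero (Nat.le_zero.mp hlen)
  | succ n IH =>
    intro z hlen hcomm
    cases hw : z.toWord with
    | nil => exact ⟨0, by rw [zpow_zero]; exact toWord_eq_nil_iff.mp hw⟩
    | cons hd tl =>
      obtain ⟨j, b⟩ := hd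
      by_cases hji : j = i
      · subst hji
        obtain ⟨u, hzu, hut⟩ := peel hw
        have hcu : Commute u (FreeGroup.of j) := by
          have hu : u = (FreeGroup.of j ^ (if b then (1:ℤ) else -1))⁻¹ * z := by
            rw [hzu]; group
          rw [hu]
          exact Commute.mul_left (((Commute.refl _).zpow_left _).inv_left) hcomm
        have hlt : u.toWord.length ≤ n := by
          rw [hut]
          have := congrArg List.length hw
          simp at this
          omega
        obtain ⟨k, hk⟩ := IH u hlt hcu
        exact ⟨(if b then (1:ℤ) else -1) + k, by rw [hzu, hk, ← zpow_add]⟩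
      · -- head letter ≠ i; look at z⁻¹
        cases hw' : z⁻¹.toWord with
        | nil =>
          have : z⁻¹ = 1 := toWord_eq_nil_iff.mp hw'
          exact ⟨0, by rw [zpow_zero, ← inv_inv z, this, inv_one]⟩
        | cons hd' tl' =>
          obtain ⟨j', b'⟩ := hd'
          by_cases hji' : j' = i
          · subst hji'
            obtain ⟨u, hzu, hut⟩ := peel hw'
            have hcu : Commute u (FreeGroup.of j') := by
              have hu : u = (FreeGroup.of j' ^ (if b' then (1:ℤ) else -1))⁻¹ * z⁻¹ := by
                rw [hzu]; group
              rw [hu]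
              exact Commute.mul_left (((Commute.refl _).zpow_left _).inv_left) hcomm.inv_left
            have hlt : u.toWord.length ≤ n := by
              rw [hut]
              have h1 : z⁻¹.toWord.length = z.toWord.length := by
                rw [toWord_inv, invRev_length]
              have h2 := congrArg List.length hw'
              simp only [List.length_cons] at h2
              rw [h1] at h2
              omega
            obtain ⟨k, hk⟩ := IH u hlt hcu
            refine ⟨-((if b' then (1:ℤ) else -1) + k), ?_⟩
            rw [← inv_inv z, hzu, hk, ← zpow_add, ← zpow_neg]
          · -- contradiction: neither first nor last letter is i
            exfalso
            have h1 : (FreeGroup.of i * z).toWord = (i, true) :: z.toWord := by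
              have : FreeGroup.of i = FreeGroup.mk [(i, true)] := rfl
              rw [this, toWord_of_mul]
              intro y hy
              rw [hw] at hy
              simp only [List.head?_cons, Option.mem_def, Option.some.injEq] at hy
              subst hy
              exact fun hh => hji hh.1.symm
            have h2 : ((FreeGroup.of i)⁻¹ * z⁻¹).toWord = (i, false) :: z⁻¹.toWord := by
              rw [← mk_singleton_false, toWord_of_mul]
              intro y hy
              rw [hw'] at hy
              simp only [List.head?_cons, Option.mem_def, Option.some.injEq] at hy
              subst hy
              exact fun hh => hji' hh.1.symm
            have h3 : (z * FreeGroup.of i).toWord = z.toWord ++ [(i, true)] := by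
              have he : z * FreeGroup.of i = ((FreeGroup.of i)⁻¹ * z⁻¹)⁻¹ := by group
              rw [he, toWord_inv, h2, toWord_inv]
              have hid : ((fun g : α × Bool => (g.1, !g.2)) ∘ fun g : α × Bool => (g.1, !g.2)) = id := by
                funext g; simp
              simp [invRev, hid]
            have h4 : (i, true) :: z.toWord = z.toWord ++ [(i, true)] := by
              rw [← h1, ← h3, hcomm.eq]
            rw [hw] at h4
            have := congrArg List.head? h4
            simp at this
            exact hji this.1.symm


end FRFAux

namespace FRFAux


open FreeGroup Subgroup

/-- Distinct generators: a nontrivial power of one is never a power of the other. -/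
lemma of_zpow_eq {α : Type*} {i j : α} (hij : i ≠ j) {k l : ℤ}
    (h : FreeGroup.of i ^ k = FreeGroup.of j ^ l) : k = 0 := by
  classical
  have hc := congrArg (FreeGroup.lift (fun x => Multiplicative.ofAdd (if x = i then (1:ℤ) else 0))) h
  rw [map_zpow, map_zpow, FreeGroup.lift_apply_of, FreeGroup.lift_apply_of] at hc
  simp only [if_pos rfl, if_neg (Ne.symm hij)] at hc
  have := congrArg Multiplicative.toAdd hc
  simpa using this

lemma freeGroup_eq_one_of_isEmpty {T : Type*} [IsEmpty T] (g : FreeGroup T) : g = 1 := by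
  classical
  cases h : g.toWord with
  | nil => exact FreeGroup.toWord_eq_nil_iff.mp h
  | cons hd tl => exact (IsEmpty.false hd.1).elim

lemma mem_zpowers_of_subsingleton {T : Type*} [Subsingleton T] (t₀ : T) (g : FreeGroup T) :
    g ∈ Subgroup.zpowers (FreeGroup.of t₀) := by
  induction g using FreeGroup.induction_on with
  | C1 => exact Subgroup.one_mem _
  | of x => rw [Subsingleton.elim x t₀]; exact Subgroup.mem_zpowers _
  | inv_of x ih => exact Subgroup.inv_mem _ ih
  | mul x y ihx ihy => exact Subgroup.mul_mem _ ihx ihy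

/-- Master lemma: a subgroup of a free group containing a nontrivial element commuting with
all of the subgroup is cyclic (generated by a single element's integer powers). -/
theorem exists_zpowers {α : Type*} {x : FreeGroup α} {H : Subgroup (FreeGroup α)}
    (hx : x ∈ H) (hx1 : x ≠ 1) (hc : ∀ u ∈ H, Commute u x) :
    ∃ c : FreeGroup α, H = Subgroup.zpowers c := by
  classical
  let T := IsFreeGroup.Generators ↥H
  letI : DecidableEq T := Classical.decEq T
  let e : ↥H ≃* FreeGroup T := IsFreeGroup.toFreeGroup ↥H
  set xH : ↥H := ⟨x, hx⟩ with hxH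
  have hxH1 : xH ≠ 1 := by
    intro h
    exact hx1 (congrArg Subtype.val h)
  have hzx1 : e xH ≠ 1 := by
    intro h
    exact hxH1 (by simpa using (EmbeddingLike.map_eq_one_iff (f := e)).mp h)
  -- e xH commutes with everything in FreeGroup T
  have hcentral : ∀ v : FreeGroup T, Commute v (e xH) := by
    intro v
    have h1 : Commute (e.symm v) xH := by
      have h2 : Commute ((e.symm v : ↥H) : FreeGroup α) x := hc _ (e.symm v).2
      have : ((e.symm v * xH : ↥H) : FreeGroup α) = ((xH * e.symm v : ↥H) : FreeGroup α) := by
        push_cast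
        exact h2
      exact Subtype.coe_injective this
    have := h1.map e.toMonoidHom
    simpa using this
  -- T is nonempty
  have hTne : Nonempty T := by
    by_contra hT
    haveI : IsEmpty T := not_nonempty_iff.mp hT
    exact hzx1 (freeGroup_eq_one_of_isEmpty _)
  obtain ⟨t₀⟩ := hTne
  -- T is a subsingleton
  haveI : Subsingleton T := by
    constructor
    intro t₁ t₂
    by_contra ht
    obtain ⟨k, hk⟩ := commute_of t₁ (e xH).toWord.length (e xH) le_rfl
      (hcentral (FreeGroup.of t₁)).symm
    obtain ⟨l, hl⟩ := commute_of t₂ (e xH).toWord.length (e xH) le_rfl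
      (hcentral (FreeGroup.of t₂)).symm
    have hk0 : k = 0 := of_zpow_eq ht (hk.symm.trans hl)
    rw [hk0, zpow_zero] at hk
    exact hzx1 hk
  refine ⟨((e.symm (FreeGroup.of t₀) : ↥H) : FreeGroup α), ?_⟩
  apply le_antisymm
  · intro u hu
    obtain ⟨k, hk⟩ := Subgroup.mem_zpowers_iff.mp (mem_zpowers_of_subsingleton t₀ (e ⟨u, hu⟩))
    rw [Subgroup.mem_zpowers_iff]
    refine ⟨k, ?_⟩
    have : e.symm (FreeGroup.of t₀ ^ k) = ⟨u, hu⟩ := by rw [hk]; simp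
    rw [map_zpow] at this
    calc ((e.symm (FreeGroup.of t₀) : ↥H) : FreeGroup α) ^ k
        = ((e.symm (FreeGroup.of t₀) ^ k : ↥H) : FreeGroup α) := by push_cast; rfl
      _ = u := by rw [this]
  · rw [Subgroup.zpowers_le]
    exact (e.symm (FreeGroup.of t₀)).2



open FreeGroup Subgroup

theorem freeGroup_torsionFree (α : Type*) : ∀ g : FreeGroup α, g ≠ 1 → ¬IsOfFinOrder g := by
  intro g hg hfin
  set H : Subgroup (FreeGroup α) := Subgroup.zpowers g with hH
  haveI : Finite ↥H := hfin.finite_zpowers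
  let T := IsFreeGroup.Generators ↥H
  let e : ↥H ≃* FreeGroup T := IsFreeGroup.toFreeGroup ↥H
  have hgH : g ∈ H := Subgroup.mem_zpowers g
  have hT : Nonempty T := by
    by_contra hT
    haveI : IsEmpty T := not_nonempty_iff.mp hT
    have : e ⟨g, hgH⟩ = 1 := freeGroup_eq_one_of_isEmpty _
    have h2 : (⟨g, hgH⟩ : ↥H) = 1 := by
      simpa using (EmbeddingLike.map_eq_one_iff (f := e)).mp this
    exact hg (congrArg Subtype.val h2)
  obtain ⟨t₀⟩ := hT
  -- the element e.symm (of t₀) has finite order (H is finite) but maps to ofAdd 1 in ℤ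
  let ψ : FreeGroup T →* Multiplicative ℤ :=
    FreeGroup.lift (fun _ => Multiplicative.ofAdd (1:ℤ))
  have hfin2 : IsOfFinOrder (e.symm (FreeGroup.of t₀)) := isOfFinOrder_of_finite _
  have hfin3 : IsOfFinOrder (ψ (FreeGroup.of t₀)) := by
    have h1 := e.toMonoidHom.isOfFinOrder hfin2
    simp only [MulEquiv.coe_toMonoidHom, MulEquiv.apply_symm_apply] at h1
    exact ψ.isOfFinOrder h1
  rw [FreeGroup.lift_apply_of] at hfin3
  obtain ⟨n, hn, hpow⟩ := isOfFinOrder_iff_pow_eq_one.mp hfin3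
  have : (n : ℤ) = 0 := by
    have := congrArg Multiplicative.toAdd hpow
    simpa using this
  omega

/-- Powers: if `z ^ k = 1` in a free group with `z ≠ 1` then `k = 0`. -/
lemma zpow_eq_one_imp {α : Type*} {z : FreeGroup α} {k : ℤ} (hz : z ≠ 1) (h : z ^ k = 1) :
    k = 0 := by
  by_contra hk
  apply freeGroup_torsionFree α z hz
  refine isOfFinOrder_iff_pow_eq_one.mpr ⟨k.natAbs, Int.natAbs_pos.mpr hk, ?_⟩
  rcases Int.natAbs_eq k with he | he
  · rw [← zpow_natCast, ← he, h]
  · rw [← zpow_natCast, ← neg_neg (k.natAbs : ℤ), ← he, zpow_neg, h, inv_one]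



open FreeGroup Subgroup

lemma conj_commute {G : Type*} [Group G] {u v g : G} (h : Commute u v) :
    Commute (g⁻¹ * u * g) (g⁻¹ * v * g) := by
  unfold Commute SemiconjBy
  calc (g⁻¹ * u * g) * (g⁻¹ * v * g) = g⁻¹ * (u * v) * g := by group
    _ = g⁻¹ * (v * u) * g := by rw [h.eq]
    _ = (g⁻¹ * v * g) * (g⁻¹ * u * g) := by group

lemma conj_zpow' {G : Type*} [Group G] (g c : G) (k : ℤ) :
    (g⁻¹ * c * g) ^ k = g⁻¹ * c ^ k * g := by
  have := conj_zpow (i := k) (a := g⁻¹) (b := c)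
  rwa [inv_inv] at this

/-- The centralizer of a nontrivial element of a free group is cyclic. -/
lemma centralizer_cyclic {α : Type*} {x : FreeGroup α} (hx : x ≠ 1) :
    ∃ c : FreeGroup α, c ≠ 1 ∧ Commute c x ∧
      (∀ u : FreeGroup α, Commute u x → ∃ k : ℤ, u = c ^ k) := by
  have hxc : x ∈ Subgroup.centralizer {x} := by
    rw [Subgroup.mem_centralizer_iff]
    rintro h ⟨rfl⟩
    rfl
  obtain ⟨c, hc⟩ := exists_zpowers hxc hx (fun u hu =>
    (Subgroup.mem_centralizer_iff.mp hu x rfl).symm)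
  have hmem : ∀ u : FreeGroup α, Commute u x → ∃ k : ℤ, u = c ^ k := by
    intro u hu
    have : u ∈ Subgroup.centralizer {x} := by
      rw [Subgroup.mem_centralizer_iff]
      rintro h ⟨rfl⟩
      exact hu.symm
    rw [hc, Subgroup.mem_zpowers_iff] at this
    obtain ⟨k, hk⟩ := this
    exact ⟨k, hk.symm⟩
  have hcx : Commute c x := by
    have : c ∈ Subgroup.centralizer {x} := by rw [hc]; exact Subgroup.mem_zpowers c
    exact (Subgroup.mem_centralizer_iff.mp this x rfl).symm
  refine ⟨c, ?_, hcx, hmem⟩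
  intro hc1
  obtain ⟨k, hk⟩ := hmem x (Commute.refl x)
  rw [hc1, one_zpow] at hk
  exact hx hk

/-- Free groups are commutative transitive. -/
theorem free_ct {α : Type*} {a b c : FreeGroup α} (hb : b ≠ 1)
    (h1 : Commute a b) (h2 : Commute b c) : Commute a c := by
  obtain ⟨d, _, _, hmem⟩ := centralizer_cyclic hb
  obtain ⟨k, hk⟩ := hmem a h1
  obtain ⟨l, hl⟩ := hmem c h2.symm
  rw [hk, hl]
  exact (Commute.refl d).zpow_zpow k l

/-- Key CSA-type property of free groups. -/
theorem free_csa {α : Type*} {x b : FreeGroup α} (hx : x ≠ 1)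
    (h : Commute x (b⁻¹ * x * b)) : Commute x b := by
  by_cases hb1 : b = 1
  · rw [hb1]; exact Commute.one_right x
  obtain ⟨c, hc1, hcx, hcmem⟩ := centralizer_cyclic hx
  set y := b⁻¹ * x * b with hy_def
  have hxy : x = b * y * b⁻¹ := by rw [hy_def]; group
  have hy1 : y ≠ 1 := by
    intro hy
    apply hx
    rw [hxy, hy, mul_one, mul_inv_cancel]
  obtain ⟨n, hn⟩ := hcmem y h.symm
  obtain ⟨m, hm⟩ := hcmem x (Commute.refl x)
  obtain ⟨d, hd1, hdy, hdmem⟩ := centralizer_cyclic hy1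
  -- b⁻¹ c b commutes with y
  obtain ⟨q, hq⟩ := hdmem (b⁻¹ * c * b) (conj_commute hcx)
  -- b d b⁻¹ commutes with x
  have hσd : Commute (b * d * b⁻¹) x := by
    have h2 : Commute (b⁻¹⁻¹ * d * b⁻¹) (b⁻¹⁻¹ * y * b⁻¹) := conj_commute hdy
    rw [inv_inv, ← hxy] at h2
    exact h2
  obtain ⟨r, hr⟩ := hcmem _ hσd
  -- d = d ^ (q * r)
  have hdqr : d = d ^ (q * r) := by
    calc d = b⁻¹ * (b * d * b⁻¹) * b := by group
      _ = b⁻¹ * c ^ r * b := by rw [hr]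
      _ = (b⁻¹ * c * b) ^ r := (conj_zpow' b c r).symm
      _ = (d ^ q) ^ r := by rw [hq]
      _ = d ^ (q * r) := by rw [← zpow_mul]
  have hqr : q * r = 1 := by
    have h3 : d ^ (q * r - 1) = 1 := by
      rw [zpow_sub, zpow_one, ← hdqr, mul_inv_cancel]
    have := zpow_eq_one_imp hd1 h3
    omega
  -- c is in the centralizer of y
  have hcy : Commute c y := by rw [hn]; exact (Commute.refl c).zpow_right n
  obtain ⟨p, hp⟩ := hdmem c hcy
  have hq2 : q * q = 1 := by
    have hu := Int.isUnit_iff.mp (IsUnit.of_mul_eq_one r hqr)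
    rcases hu with h | h <;> rw [h] <;> norm_num
  -- d = (b⁻¹ c b) ^ q
  have hd_eq : d = (b⁻¹ * c * b) ^ q := by
    rw [hq, ← zpow_mul, hq2, zpow_one]
  -- master relation : b * c * b⁻¹ = c ^ P
  set P : ℤ := q * p with hP_def
  have hcP : b * c * b⁻¹ = c ^ P := by
    have h5 : c = b⁻¹ * c ^ P * b := by
      calc c = d ^ p := hp
        _ = ((b⁻¹ * c * b) ^ q) ^ p := by rw [← hd_eq]
        _ = (b⁻¹ * c * b) ^ P := by rw [← zpow_mul]
        _ = b⁻¹ * c ^ P * b := conj_zpow' b c P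
    calc b * c * b⁻¹ = b * (b⁻¹ * c ^ P * b) * b⁻¹ := by rw [← h5]
      _ = c ^ P := by group
  have hP0 : P ≠ 0 := by
    intro h0
    rw [h0, zpow_zero] at hcP
    apply hc1
    calc c = b⁻¹ * (b * c * b⁻¹) * b := by group
      _ = b⁻¹ * 1 * b := by rw [hcP]
      _ = 1 := by group
  -- helper: from Commute c b we conclude
  have finish : Commute c b → Commute x b := by
    intro hcb
    rw [hm]
    exact hcb.zpow_left m
  by_cases hP1 : P = 1
  · apply finish
    rw [hP1, zpow_one] at hcP
    have : b * c = c * b := by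
      calc b * c = (b * c * b⁻¹) * b := by group
        _ = c * b := by rw [hcP]
    have hbc : Commute b c := this
    exact hbc.symm
  by_cases hPm1 : P = -1
  · -- b c b⁻¹ = c⁻¹ : then b² commutes with c, leading to c² = 1, contradiction
    exfalso
    rw [hPm1, zpow_neg, zpow_one] at hcP
    have hb2c : Commute (b * b) c := by
      have : (b * b) * c * (b * b)⁻¹ = c := by
        calc (b * b) * c * (b * b)⁻¹ = b * (b * c * b⁻¹) * b⁻¹ := by group
          _ = b * c⁻¹ * b⁻¹ := by rw [hcP]
          _ = (b * c * b⁻¹)⁻¹ := by group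
          _ = (c⁻¹)⁻¹ := by rw [hcP]
          _ = c := inv_inv c
      have h6 : (b * b) * c = c * (b * b) := by
        calc (b * b) * c = ((b * b) * c * (b * b)⁻¹) * (b * b) := by group
          _ = c * (b * b) := by rw [this]
      exact h6
    have hbb1 : b * b ≠ 1 := by
      intro hbb
      apply hb1
      have : b ^ (2:ℤ) = 1 := by
        rw [show (2:ℤ) = 1 + 1 by norm_num, zpow_add, zpow_one, hbb]
      have := zpow_eq_one_imp (z := b) (k := 2) hb1 this
      omega
    obtain ⟨f, hf1, hfc, hfmem⟩ := centralizer_cyclic hc1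
    obtain ⟨v, hv⟩ := hfmem (b * b) hb2c
    obtain ⟨g', hg1, hgw, hgmem⟩ := centralizer_cyclic hbb1
    obtain ⟨β, hβ⟩ := hgmem b (Commute.mul_right (Commute.refl b) (Commute.refl b))
    obtain ⟨γ, hγ⟩ := hgmem f (by rw [hv]; exact (Commute.refl f).zpow_right v)
    have hbc : Commute b c := by
      obtain ⟨u', hu'⟩ := hfmem c (Commute.refl c)
      rw [hβ, hu', hγ, ← zpow_mul]
      exact (Commute.refl g').zpow_zpow β (γ * u')
    have : c⁻¹ = c := by
      calc c⁻¹ = b * c * b⁻¹ := hcP.symm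
        _ = c * b * b⁻¹ := by rw [hbc.eq]
        _ = c := by group
    have hcc : c ^ (2:ℤ) = 1 := by
      rw [show (2:ℤ) = 1 + 1 by norm_num, zpow_add, zpow_one]
      nth_rewrite 1 [← this]
      group
    have := zpow_eq_one_imp hc1 hcc
    omega
  · -- |P| ≥ 2 : build a strictly increasing chain of cyclic subgroups
    exfalso
    set cseq : ℕ → FreeGroup α := fun k => (b ^ k)⁻¹ * c * b ^ k with hcseq
    have hcseq1 : ∀ k, cseq k ≠ 1 := by
      intro k hk
      apply hc1
      have : c = b ^ k * (cseq k) * (b ^ k)⁻¹ := by rw [hcseq]; group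
      rw [this, hk, mul_one, mul_inv_cancel]
    have hrel : ∀ k, cseq k = (cseq (k + 1)) ^ P := by
      intro k
      rw [hcseq]
      simp only
      rw [conj_zpow', ← hcP]
      rw [pow_succ]
      group
    have hmono : Monotone (fun k => Subgroup.zpowers (cseq k)) := by
      apply monotone_nat_of_le_succ
      intro k
      rw [Subgroup.zpowers_le, Subgroup.mem_zpowers_iff]
      exact ⟨P, (hrel k).symm⟩
    have hdir := hmono.directed_le
    set A : Subgroup (FreeGroup α) := ⨆ k : ℕ, Subgroup.zpowers (cseq k) with hA
    have hcA : c ∈ A := by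
      have h0 : cseq 0 = c := by rw [hcseq]; simp
      have := le_iSup (fun k => Subgroup.zpowers (cseq k)) 0
      exact this (h0 ▸ Subgroup.mem_zpowers (cseq 0))
    have hcommA : ∀ u ∈ A, ∀ w ∈ A, Commute u w := by
      intro u hu w hw
      rw [hA, Subgroup.mem_iSup_of_directed hdir] at hu hw
      obtain ⟨k, hk⟩ := hu
      obtain ⟨l, hl⟩ := hw
      have hk' : u ∈ Subgroup.zpowers (cseq (max k l)) := hmono (le_max_left k l) hk
      have hl' : w ∈ Subgroup.zpowers (cseq (max k l)) := hmono (le_max_right k l) hl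
      obtain ⟨s, hs⟩ := Subgroup.mem_zpowers_iff.mp hk'
      obtain ⟨t, ht⟩ := Subgroup.mem_zpowers_iff.mp hl'
      rw [← hs, ← ht]
      exact (Commute.refl _).zpow_zpow s t
    obtain ⟨E, hE⟩ := exists_zpowers hcA hc1 (fun u hu => hcommA u hu c hcA)
    have hEA : E ∈ A := hE ▸ Subgroup.mem_zpowers E
    rw [hA, Subgroup.mem_iSup_of_directed hdir] at hEA
    obtain ⟨K, hK⟩ := hEA
    have hsub : A ≤ Subgroup.zpowers (cseq K) := by
      rw [hE, Subgroup.zpowers_le]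
      exact hK
    have hK1 : cseq (K + 1) ∈ Subgroup.zpowers (cseq K) := by
      apply hsub
      exact (le_iSup (fun k => Subgroup.zpowers (cseq k)) (K + 1))
        (Subgroup.mem_zpowers (cseq (K + 1)))
    obtain ⟨t, ht⟩ := Subgroup.mem_zpowers_iff.mp hK1
    have : cseq (K + 1) ^ (P * t - 1) = 1 := by
      rw [zpow_sub, zpow_one, zpow_mul, ← hrel K, ht, mul_inv_cancel]
    have hPt := zpow_eq_one_imp (hcseq1 (K + 1)) this
    have : P * t = 1 := by omega
    have hu := Int.isUnit_iff.mp (IsUnit.of_mul_eq_one t this)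
    rcases hu with h | h
    · exact hP1 h
    · exact hPm1 h



/-- If the elements of a set pairwise commute, so do the elements of its closure. -/
lemma closure_comm {G : Type*} [Group G] {S : Set G} (h : ∀ a ∈ S, ∀ b ∈ S, a * b = b * a) :
    ∀ x ∈ Subgroup.closure S, ∀ y ∈ Subgroup.closure S, x * y = y * x := by
  have step1 : ∀ a ∈ S, ∀ y ∈ Subgroup.closure S, a * y = y * a := by
    intro a ha
    have : Subgroup.closure S ≤ Subgroup.centralizer {a} := by
      rw [Subgroup.closure_le]
      intro s hs
      rw [SetLike.mem_coe, Subgroup.mem_centralizer_iff]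
      rintro q ⟨rfl⟩
      exact h a ha s hs
    intro y hy
    exact Subgroup.mem_centralizer_iff.mp (this hy) a rfl
  intro x hx y hy
  have : Subgroup.closure S ≤ Subgroup.centralizer {y} := by
    rw [Subgroup.closure_le]
    intro s hs
    rw [SetLike.mem_coe, Subgroup.mem_centralizer_iff]
    rintro q ⟨rfl⟩
    exact (step1 s hs y hy).symm
  exact (Subgroup.mem_centralizer_iff.mp (this hx) y rfl).symm


end FRFAux


/-- A group `G` is *fully residually free* (freely discriminated) if for every finite
set of nontrivial elements of `G` there exists a homomorphism to a free group sending
each of these elements to a nontrivial element. -/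
def FullyResiduallyFree (G : Type*) [Group G] : Prop :=
  ∀ (m : ℕ) (g : Fin m → G), (∀ i, g i ≠ 1) →
    ∃ (ι : Type) (φ : G →* FreeGroup ι), ∀ i, φ (g i) ≠ 1

/-- The conjugate `H^g = g⁻¹ H g` of a subgroup `H` by an element `g`. -/
def Subgroup.conjBy {G : Type*} [Group G] (H : Subgroup G) (g : G) : Subgroup G :=
  H.map (MulAut.conj g⁻¹).toMonoidHom

/-- A subgroup `M` of `G` is a maximal abelian subgroup if it is abelian and maximal
among abelian subgroups of `G`. -/
def IsMaximalAbelian {G : Type*} [Group G] (M : Subgroup G) : Prop :=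
  (∀ x ∈ M, ∀ y ∈ M, x * y = y * x) ∧
    ∀ N : Subgroup G, (∀ x ∈ N, ∀ y ∈ N, x * y = y * x) → M ≤ N → N = M

/-- Every fully residually free group is a torsion-free CSA group: it has no nontrivial
elements of finite order, and every maximal abelian subgroup `M` is malnormal, i.e.
`g⁻¹Mg ∩ M = {1}` for every `g ∉ M`. -/
theorem fully_residually_free_is_torsion_free_CSA
    (G : Type*) [Group G] (hG : FullyResiduallyFree G) :
    (∀ g : G, g ≠ 1 → ¬IsOfFinOrder g) ∧
      ∀ M : Subgroup G, IsMaximalAbelian M →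
        ∀ g : G, g ∉ M → (M.conjBy g) ⊓ M = ⊥ := by
  constructor
  · -- torsion-freeness
    intro g hg hfin
    obtain ⟨ι, φ, hφ⟩ := hG 1 ![g] (by
      intro i
      fin_cases i
      simpa using hg)
    have h0 : φ g ≠ 1 := by simpa using hφ 0
    exact FRFAux.freeGroup_torsionFree ι (φ g) h0 (φ.isOfFinOrder hfin)
  · -- CSA
    rintro M ⟨hab, hmax⟩ g hg
    rw [eq_bot_iff]
    intro z hz
    rw [Subgroup.mem_inf] at hz
    obtain ⟨hz1, hz2⟩ := hz
    rw [Subgroup.mem_bot]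
    by_contra hzne
    obtain ⟨w, hwM, hwz⟩ := hz1
    have hwz' : g⁻¹ * w * g = z := by
      simpa [MulAut.conj_apply, mul_assoc] using hwz
    have hw_eq : w = g * z * g⁻¹ := by rw [← hwz']; group
    -- z commutes with g z g⁻¹
    have hzw : Commute z (g * z * g⁻¹) := by
      rw [← hw_eq]
      exact hab z hz2 w hwM
    -- Step 1 : z commutes with g
    have key : Commute z g := by
      by_contra hnc
      have hk : z * g * z⁻¹ * g⁻¹ ≠ 1 := by
        intro hk1
        apply hnc
        have : z * g = g * z := by
          calc z * g = (z * g * z⁻¹ * g⁻¹) * (g * z) := by group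
            _ = g * z := by rw [hk1, one_mul]
        exact this
      obtain ⟨ι, φ, hφ⟩ := hG 2 ![z, z * g * z⁻¹ * g⁻¹] (by
        intro i
        fin_cases i
        · simpa using hzne
        · simpa using hk)
      have h0 : φ z ≠ 1 := by simpa using hφ 0
      have h1 : φ (z * g * z⁻¹ * g⁻¹) ≠ 1 := by simpa using hφ 1
      apply h1
      have hcz : Commute (φ z) (((φ g)⁻¹)⁻¹ * φ z * (φ g)⁻¹) := by
        rw [inv_inv]
        have := hzw.map φ
        simpa [map_mul, map_inv] using this
      have hfc : Commute (φ z) (φ g)⁻¹ := FRFAux.free_csa h0 hcz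
      have hfc2 : Commute (φ z) (φ g) := by
        have := hfc.inv_right
        rwa [inv_inv] at this
      have : φ z * φ g * (φ z)⁻¹ * (φ g)⁻¹ = 1 := by
        rw [hfc2.eq]
        group
      simpa [map_mul, map_inv] using this
    -- Step 2 : g commutes with every element of M
    have hgm : ∀ m ∈ M, Commute g m := by
      intro m hm
      by_cases hm1 : m = 1
      · rw [hm1]; exact Commute.one_right g
      by_contra hnc
      have hk : g * m * g⁻¹ * m⁻¹ ≠ 1 := by
        intro hk1
        apply hnc
        have : g * m = m * g := by
          calc g * m = (g * m * g⁻¹ * m⁻¹) * (m * g) := by group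
            _ = m * g := by rw [hk1, one_mul]
        exact this
      obtain ⟨ι, φ, hφ⟩ := hG 2 ![z, g * m * g⁻¹ * m⁻¹] (by
        intro i
        fin_cases i
        · simpa using hzne
        · simpa using hk)
      have h0 : φ z ≠ 1 := by simpa using hφ 0
      have h1 : φ (g * m * g⁻¹ * m⁻¹) ≠ 1 := by simpa using hφ 1
      apply h1
      have hgz : Commute (φ g) (φ z) := key.symm.map φ
      have hzm : Commute (φ z) (φ m) := by
        have hcm : Commute z m := hab z hz2 m hm
        exact hcm.map φ
      have hfc : Commute (φ g) (φ m) := FRFAux.free_ct h0 hgz hzm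
      have : φ g * φ m * (φ g)⁻¹ * (φ m)⁻¹ = 1 := by
        rw [hfc.eq]
        group
      simpa [map_mul, map_inv] using this
    -- Step 3 : M ∪ {g} generates an abelian subgroup, contradicting maximality
    set S : Set G := ↑M ∪ {g} with hS
    have hcommS : ∀ a ∈ S, ∀ b ∈ S, a * b = b * a := by
      rintro a (haM | rfl) b (hbM | rfl)
      · exact hab a haM b hbM
      · exact (hgm a haM).symm.eq
      · exact (hgm b hbM).eq
      · rfl
    have habN := FRFAux.closure_comm hcommS
    have hMN : M ≤ Subgroup.closure S := by
      intro u hu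
      exact Subgroup.subset_closure (Or.inl hu)
    have hNM := hmax (Subgroup.closure S) habN hMN
    apply hg
    rw [← hNM]
    exact Subgroup.subset_closure (Or.inr rfl)
end

section
/- Let F be a non-abelian free group and let G be a finitely generated F-group. Then G is F-isomorphic to the coordinate group F_{R(S)} of a non-empty irreducible algebraic set V_F(S) ⊆ F^n, for some n and some system of equations S ⊆ F ∗ F(x_1, …, x_n), if and only if G is freely F-discriminated by F. -/
open Monoid

section EquationsOverGroups

variable {F : Type*} [Group F] {V : Type*}

/-- Substitution of a tuple `a : V → F` for the variables: the homomorphism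
`F[X] = F ∗ F(X) →* F` which is the identity on `F` and sends the variable `x` to `a x`. -/
noncomputable def substHom (a : V → F) : Coprod F (FreeGroup V) →* F :=
  Coprod.lift (MonoidHom.id F) (FreeGroup.lift a)

/-- The algebraic set `V_F(S)` defined by a system of equations `S ⊆ F[X]`. -/
noncomputable def algSet (S : Set (Coprod F (FreeGroup V))) : Set (V → F) :=
  {a | ∀ w ∈ S, substHom a w = 1}

/-- The radical `R(S)` of a system of equations: all `T ∈ F[X]` vanishing on every
solution of `S = 1`. -/
noncomputable def radical (S : Set (Coprod F (FreeGroup V))) :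
    Subgroup (Coprod F (FreeGroup V)) where
  carrier := {T | ∀ a ∈ algSet S, substHom a T = 1}
  one_mem' := fun _ _ => map_one _
  mul_mem' := by
    intro x y hx hy a ha
    simp [map_mul, hx a ha, hy a ha]
  inv_mem' := by
    intro x hx a ha
    simp [map_inv, hx a ha]

instance radical_normal (S : Set (Coprod F (FreeGroup V))) : (radical S).Normal := by
  constructor
  intro T hT g a ha
  have h1 : substHom a T = 1 := hT a ha
  simp [map_mul, map_inv, h1]

/-- An algebraic set is irreducible if it is nonempty and is not the union of two
algebraic sets both properly contained in it. -/
def IsIrreducibleAlgSet (W : Set (V → F)) : Prop :=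
  W.Nonempty ∧
    ¬ ∃ S₁ S₂ : Set (Coprod F (FreeGroup V)),
        algSet S₁ ⊂ W ∧ algSet S₂ ⊂ W ∧ W = algSet S₁ ∪ algSet S₂

end EquationsOverGroups

section FreeGroupFacts

lemma swap_not_commute : ¬ Commute (Equiv.swap (0:Fin 3) 1) (Equiv.swap (1:Fin 3) 2) := by
  intro hc
  have h := Equiv.ext_iff.mp hc 0
  simp [Equiv.Perm.mul_apply, Equiv.swap_apply_of_ne_of_ne] at h

-- distinct generators don't commute
lemma fg_not_commute {γ : Type*} {a b : γ} (h : a ≠ b) :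
    ¬ Commute (FreeGroup.of a) (FreeGroup.of b) := by
  classical
  intro hc
  let f : γ → Equiv.Perm (Fin 3) := fun c => if c = a then Equiv.swap 0 1
    else if c = b then Equiv.swap 1 2 else 1
  have h2 := hc.map (FreeGroup.lift f)
  simp only [FreeGroup.lift_apply_of, f, if_pos rfl, if_neg h.symm, if_pos rfl] at h2
  exact swap_not_commute h2

-- subsingleton base: cyclic
lemma fg_subsingleton_cyclic (γ : Type*) [Subsingleton γ] :
    ∃ ζ : FreeGroup γ, ∀ w : FreeGroup γ, ∃ n : ℤ, w = ζ ^ n := by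
  rcases isEmpty_or_nonempty γ with h | ⟨⟨c⟩⟩
  · refine ⟨1, fun w => ⟨0, ?_⟩⟩
    induction w using FreeGroup.induction_on with
    | C1 => simp
    | of c => exact h.elim c
    | inv_of c _ => exact h.elim c
    | mul x y hx hy => rw [hx, hy]; simp
  · refine ⟨FreeGroup.of c, fun w => ?_⟩
    induction w using FreeGroup.induction_on with
    | C1 => exact ⟨0, by simp⟩
    | of d => exact ⟨1, by rw [zpow_one]; exact congrArg FreeGroup.of (Subsingleton.elim d c)⟩
    | inv_of d ih => obtain ⟨n, hn⟩ := ih; exact ⟨-n, by rw [hn]; simp⟩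
    | mul x y hx hy =>
        obtain ⟨n, hn⟩ := hx; obtain ⟨m, hm⟩ := hy
        exact ⟨n + m, by rw [hn, hm, zpow_add]⟩


-- commutative subgroup of a free group is cyclic
lemma subgroup_comm_cyclic {γ : Type*} (H : Subgroup (FreeGroup γ))
    (hc : ∀ x ∈ H, ∀ y ∈ H, Commute x y) :
    ∃ z ∈ H, ∀ x ∈ H, ∃ n : ℤ, x = z ^ n := by
  let e := IsFreeGroup.toFreeGroup (G := ↥H)
  have hsub : Subsingleton (IsFreeGroup.Generators ↥H) := by
    constructor
    intro a b
    by_contra hab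
    refine fg_not_commute hab ?_
    have h1 : Commute ((e.symm (FreeGroup.of a)) : FreeGroup γ)
        ((e.symm (FreeGroup.of b)) : FreeGroup γ) :=
      hc _ (e.symm (FreeGroup.of a)).2 _ (e.symm (FreeGroup.of b)).2
    have h2 : Commute (e.symm (FreeGroup.of a)) (e.symm (FreeGroup.of b)) :=
      Subtype.ext h1
    simpa using h2.map e.toMonoidHom
  obtain ⟨ζ, hζ⟩ := fg_subsingleton_cyclic (IsFreeGroup.Generators ↥H)
  refine ⟨((e.symm ζ : ↥H) : FreeGroup γ), (e.symm ζ).2, fun x hx => ?_⟩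
  obtain ⟨n, hn⟩ := hζ (e ⟨x, hx⟩)
  refine ⟨n, ?_⟩
  have : (⟨x, hx⟩ : ↥H) = (e.symm ζ) ^ n := by
    apply e.injective
    rw [hn, map_zpow, MulEquiv.apply_symm_apply]
  have := congrArg (Subtype.val) this
  simpa using this


lemma fg_isEmpty {γ : Type*} [IsEmpty γ] (w : FreeGroup γ) : w = 1 := by
  induction w using FreeGroup.induction_on with
  | C1 => rfl
  | of c => exact isEmptyElim c
  | inv_of c _ => exact isEmptyElim c
  | mul x y hx hy => rw [hx, hy, one_mul]

lemma fg_torsionfree {γ : Type*} (x : FreeGroup γ) (m : ℕ) (hm : m ≠ 0)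
    (h : x ^ m = 1) : x = 1 := by
  by_contra hx
  set H := Subgroup.zpowers x with hH
  have hfin : ∀ h : ↥H, (h : FreeGroup γ) ^ m = 1 := by
    rintro ⟨y, k, rfl⟩
    show (x ^ k) ^ (m : ℤ) = 1
    rw [← zpow_natCast x m] at h
    rw [← zpow_mul, mul_comm, zpow_mul, h, one_zpow]
  let e := IsFreeGroup.toFreeGroup (G := ↥H)
  have hxH : x ∈ H := Subgroup.mem_zpowers x
  have hne : Nonempty (IsFreeGroup.Generators ↥H) := by
    by_contra hemp
    have : IsEmpty (IsFreeGroup.Generators ↥H) := not_nonempty_iff.mp hemp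
    have h1 : e ⟨x, hxH⟩ = e 1 := by rw [fg_isEmpty (e ⟨x, hxH⟩), map_one]
    have := e.injective h1
    exact hx (by simpa [Subtype.ext_iff] using this)
  obtain ⟨c⟩ := hne
  have h1 : (FreeGroup.of c : FreeGroup (IsFreeGroup.Generators ↥H)) ^ m = 1 := by
    have h2 := hfin (e.symm (FreeGroup.of c))
    have h3 : (e.symm (FreeGroup.of c)) ^ m = 1 := by
      apply Subtype.ext; simpa using h2
    have := congrArg e h3
    simpa using this
  have h4 := congrArg (FreeGroup.lift (fun _ => (Multiplicative.ofAdd (1:ℤ)))) h1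
  simp only [map_pow, FreeGroup.lift_apply_of, map_one] at h4
  have : (m : ℤ) = 0 := by
    have := congrArg Multiplicative.toAdd h4
    simpa [toAdd_pow] using this
  exact hm (by exact_mod_cast this)


lemma closure_comm {G : Type*} [Group G] {s : Set G}
    (h : ∀ a ∈ s, ∀ b ∈ s, Commute a b) :
    ∀ x ∈ Subgroup.closure s, ∀ y ∈ Subgroup.closure s, Commute x y := by
  have h1 : Subgroup.closure s ≤ Subgroup.centralizer s :=
    (Subgroup.closure_le _).mpr (fun b hb => Subgroup.mem_centralizer_iff.mpr
      (fun a ha => (h a ha b hb).eq))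
  intro x hx y hy
  have h2 : Subgroup.closure s ≤ Subgroup.centralizer {y} := by
    refine (Subgroup.closure_le _).mpr (fun b hb => Subgroup.mem_centralizer_iff.mpr ?_)
    rintro a rfl
    exact (Subgroup.mem_centralizer_iff.mp (h1 hy) b hb).symm
  exact (Subgroup.mem_centralizer_iff.mp (h2 hx) y rfl).symm

lemma fg_commute_cyclic {γ : Type*} {x y : FreeGroup γ} (h : Commute x y) :
    ∃ z : FreeGroup γ, (∃ n : ℤ, x = z ^ n) ∧ (∃ m : ℤ, y = z ^ m) := by
  have hpair : ∀ a ∈ ({x, y} : Set (FreeGroup γ)), ∀ b ∈ ({x, y} : Set (FreeGroup γ)),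
      Commute a b := by
    rintro a (rfl | rfl) b (rfl | rfl)
    exacts [Commute.refl _, h, h.symm, Commute.refl _]
  obtain ⟨z, _, hz⟩ := subgroup_comm_cyclic (Subgroup.closure {x, y}) (closure_comm hpair)
  exact ⟨z, hz x (Subgroup.subset_closure (by simp)),
    hz y (Subgroup.subset_closure (by simp))⟩

/-- an element commuting with a generator is a power of that generator -/
lemma fg_commute_of {γ : Type*} {a : γ} {w : FreeGroup γ}
    (h : Commute w (FreeGroup.of a)) : ∃ p : ℤ, w = FreeGroup.of a ^ p := by
  classical
  obtain ⟨u, ⟨n, hn⟩, ⟨m, hm⟩⟩ := fg_commute_cyclic h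
  have hπ := congrArg (FreeGroup.lift
    (fun d => if d = a then (Multiplicative.ofAdd (1:ℤ)) else 1)) hm
  simp only [FreeGroup.lift_apply_of, if_pos rfl, map_zpow] at hπ
  have h1 : m * (FreeGroup.lift
      (fun d => if d = a then (Multiplicative.ofAdd (1:ℤ)) else 1) u).toAdd = 1 := by
    have := congrArg Multiplicative.toAdd hπ
    simpa [toAdd_zpow, eq_comm, mul_comm] using this
  have hm1 : m = 1 ∨ m = -1 := by
    rcases Int.isUnit_iff.mp (IsUnit.of_mul_eq_one (a := m) _ h1) with h' | h'
    · exact Or.inl h'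
    · exact Or.inr h'
  rcases hm1 with rfl | rfl
  · rw [zpow_one] at hm
    exact ⟨n, by rw [hn, ← hm]⟩
  · have hu : u = (FreeGroup.of a)⁻¹ := by
      rw [zpow_neg, zpow_one] at hm
      rw [← inv_inv u, ← hm]
    refine ⟨-n, ?_⟩
    rw [hn, hu, inv_zpow, ← zpow_neg]

/-- commutation is transitive at nontrivial elements: centralizers are abelian -/
lemma fg_centralizer_comm {γ : Type*} {c : FreeGroup γ} (hc : c ≠ 1)
    {x y : FreeGroup γ} (hx : Commute x c) (hy : Commute y c) : Commute x y := by
  set K := Subgroup.centralizer ({c} : Set (FreeGroup γ)) with hK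
  have hmem : ∀ g : FreeGroup γ, Commute g c → g ∈ K := by
    intro g hg
    exact Subgroup.mem_centralizer_iff.mpr (by rintro h' rfl; exact hg.symm.eq)
  have hcK : c ∈ K := hmem c (Commute.refl c)
  let e := IsFreeGroup.toFreeGroup (G := ↥K)
  set c' := e ⟨c, hcK⟩ with hc'
  have hc'1 : c' ≠ 1 := by
    intro h1
    apply hc
    have h2 : (⟨c, hcK⟩ : ↥K) = 1 := e.injective (by rw [map_one]; exact h1)
    simpa [Subtype.ext_iff] using h2
  have hcentral : ∀ w : FreeGroup (IsFreeGroup.Generators ↥K), Commute c' w := by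
    intro w
    have h1 : Commute c ((e.symm w : ↥K) : FreeGroup γ) :=
      ((Subgroup.mem_centralizer_iff.mp (e.symm w).2) c rfl)
    have h2 : Commute (⟨c, hcK⟩ : ↥K) (e.symm w) := Subtype.ext h1
    simpa using h2.map e.toMonoidHom
  have hsub : Subsingleton (IsFreeGroup.Generators ↥K) := by
    constructor
    intro a b
    by_contra hab
    obtain ⟨p, hp⟩ := fg_commute_of (hcentral (FreeGroup.of a)).symm.symm
    obtain ⟨q, hq⟩ := fg_commute_of (hcentral (FreeGroup.of b)).symm.symm
    classical
    have hπ1 := congrArg (FreeGroup.lift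
      (fun d => if d = b then (Multiplicative.ofAdd (1:ℤ)) else 1)) hp
    have hπ2 := congrArg (FreeGroup.lift
      (fun d => if d = b then (Multiplicative.ofAdd (1:ℤ)) else 1)) hq
    simp only [FreeGroup.lift_apply_of, if_pos rfl, if_neg hab, map_zpow] at hπ1 hπ2
    rw [one_zpow] at hπ1
    rw [hπ1] at hπ2
    have hq0 : q = 0 := by
      have := congrArg Multiplicative.toAdd hπ2.symm
      simpa [toAdd_zpow] using this
    rw [hq0, zpow_zero] at hq
    exact hc'1 hq
  have hxK : x ∈ K := hmem x hx
  have hyK : y ∈ K := hmem y hy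
  obtain ⟨ζ, hζ⟩ := fg_subsingleton_cyclic (IsFreeGroup.Generators ↥K)
  obtain ⟨n, hn⟩ := hζ (e ⟨x, hxK⟩)
  obtain ⟨m, hm⟩ := hζ (e ⟨y, hyK⟩)
  have h1 : Commute (e ⟨x, hxK⟩) (e ⟨y, hyK⟩) := by
    rw [hn, hm]; exact Commute.zpow_zpow (Commute.refl ζ) n m
  have h2 : Commute (⟨x, hxK⟩ : ↥K) (⟨y, hyK⟩ : ↥K) := by
    have := h1.map e.symm.toMonoidHom
    simpa using this
  have h3 := congrArg Subtype.val h2.eq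
  exact h3


lemma fg_torsionfree_zpow {γ : Type*} (x : FreeGroup γ) (n : ℤ) (hn : n ≠ 0)
    (h : x ^ n = 1) : x = 1 := by
  have h1 : x ^ (n.natAbs) = 1 := by
    rcases Int.natAbs_eq n with he | he
    · rw [← zpow_natCast, ← he, h]
    · have h2 : x ^ (-(n.natAbs : ℤ)) = 1 := by rw [← he, h]
      rw [zpow_neg, inv_eq_one, zpow_natCast] at h2
      exact h2
  exact fg_torsionfree x n.natAbs (Int.natAbs_ne_zero.mpr hn) h1

lemma conj_zpow' {G : Type*} [Group G] (g x : G) (n : ℤ) :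
    (g * x * g⁻¹) ^ n = g * x ^ n * g⁻¹ := by
  simpa [MulAut.conj_apply] using (map_zpow (MulAut.conj g) x n)

lemma fg_no_zero_divisors {γ : Type*} (hna : ∃ x y : FreeGroup γ, x * y ≠ y * x)
    {a b : FreeGroup γ} (ha : a ≠ 1) (hb : b ≠ 1) :
    ∃ g : FreeGroup γ, ¬ Commute a (g * b * g⁻¹) := by
  by_contra hcon
  push_neg at hcon
  set K := Subgroup.centralizer ({a} : Set (FreeGroup γ)) with hKdef
  have hmemK : ∀ g : FreeGroup γ, Commute g a → g ∈ K := fun g hg =>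
    Subgroup.mem_centralizer_iff.mpr (by rintro h' rfl; exact hg.symm.eq)
  have hKa : ∀ g ∈ K, Commute g a := fun g hg =>
    ((Subgroup.mem_centralizer_iff.mp hg) a rfl).symm
  have hKcomm : ∀ x ∈ K, ∀ y ∈ K, Commute x y := fun x hx y hy =>
    fg_centralizer_comm ha (hKa x hx) (hKa y hy)
  obtain ⟨z, hzK, hz⟩ := subgroup_comm_cyclic K hKcomm
  have hbK : b ∈ K := by
    have := hcon 1
    simpa using (hmemK b (by simpa using this.symm))
  obtain ⟨k, hk⟩ := hz b hbK
  have hz1 : z ≠ 1 := fun h1 => hb (by rw [hk, h1, one_zpow])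
  -- z commutes with all its conjugates
  have hzconj : ∀ g : FreeGroup γ, Commute z (g * z * g⁻¹) := by
    intro g
    have hgbK : g * b * g⁻¹ ∈ K := hmemK _ (hcon g).symm
    obtain ⟨m, hm⟩ := hz _ hgbK
    have hc0 : z ^ m ≠ 1 := by
      rw [← hm]
      simp only [ne_eq, mul_inv_eq_one, conj_eq_one_iff]
      exact fun h => hb (by simpa using h)
    have he : (g * z * g⁻¹) ^ k = z ^ m := by
      rw [conj_zpow', ← hk, hm]
    refine fg_centralizer_comm hc0 (Commute.zpow_right (Commute.refl z) m) ?_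
    rw [← he]
    exact Commute.zpow_right (Commute.refl _) k
  -- conjugates of z pairwise commute
  have hpair : ∀ x ∈ Set.range (fun g : FreeGroup γ => g * z * g⁻¹),
      ∀ y ∈ Set.range (fun g : FreeGroup γ => g * z * g⁻¹), Commute x y := by
    rintro _ ⟨u, rfl⟩ _ ⟨v, rfl⟩
    have h1 := hzconj (u⁻¹ * v)
    have h2 := h1.map (MulAut.conj u).toMonoidHom
    simp only [MulAut.conj_apply, MulEquiv.coe_toMonoidHom] at h2
    rw [show u * (u⁻¹ * v * z * (u⁻¹ * v)⁻¹) * u⁻¹ = v * z * v⁻¹ by group] at h2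
    exact h2
  set M := Subgroup.closure (Set.range (fun g : FreeGroup γ => g * z * g⁻¹)) with hMdef
  obtain ⟨ζ, hζM, hζ⟩ := subgroup_comm_cyclic M (closure_comm hpair)
  have hzM : z ∈ M := Subgroup.subset_closure ⟨1, by group⟩
  have hζ1 : ζ ≠ 1 := by
    obtain ⟨n, hn⟩ := hζ z hzM
    exact fun h1 => hz1 (by rw [hn, h1, one_zpow])
  have hMnormal : ∀ g : FreeGroup γ, ∀ x ∈ M, g * x * g⁻¹ ∈ M := by
    intro g x hx
    have hle : Subgroup.map (MulAut.conj g).toMonoidHom M ≤ M := by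
      rw [hMdef, MonoidHom.map_closure]
      apply Subgroup.closure_mono
      rintro _ ⟨_, ⟨u, rfl⟩, rfl⟩
      refine ⟨g * u, ?_⟩
      simp only [MulEquiv.coe_toMonoidHom, MulAut.conj_apply]
      group
    exact hle ⟨x, hx, by simp [MulAut.conj_apply]⟩
  have hconjζ : ∀ g : FreeGroup γ, g * ζ * g⁻¹ = ζ ∨ g * ζ * g⁻¹ = ζ⁻¹ := by
    intro g
    obtain ⟨t, ht⟩ := hζ _ (hMnormal g ζ hζM)
    obtain ⟨s, hs⟩ := hζ _ (hMnormal g⁻¹ ζ hζM)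
    rw [inv_inv] at hs
    have key : ζ = ζ ^ (t * s) := by
      have h1 : ζ = g⁻¹ * (g * ζ * g⁻¹) * g := by group
      rw [ht] at h1
      have h2 : g⁻¹ * ζ ^ t * g = (g⁻¹ * ζ * g) ^ t := by
        have := conj_zpow' g⁻¹ ζ t
        rw [inv_inv] at this
        rw [this]
      have h3 : g⁻¹ * ζ * g = ζ ^ s := by
        have := hs
        rw [← this]
      rw [mul_assoc] at h1 h2
      rw [h2, h3, ← zpow_mul, mul_comm s t] at h1
      exact h1
    have hts : t * s = 1 := by
      by_contra hne
      have hzz : ζ ^ (t * s - 1) = 1 := by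
        rw [zpow_sub, ← key, zpow_one, mul_inv_cancel]
      exact hζ1 (fg_torsionfree_zpow ζ _ (by omega) hzz)
    have ht1 : t = 1 ∨ t = -1 :=
      Int.isUnit_iff.mp (IsUnit.of_mul_eq_one (a := t) s hts)
    rcases ht1 with rfl | rfl
    · left; rw [ht, zpow_one]
    · right; rw [ht]; simp
  -- ζ commutes with all squares
  have hsq : ∀ g : FreeGroup γ, Commute (g * g) ζ := by
    intro g
    have hfix : (g * g) * ζ * (g * g)⁻¹ = ζ := by
      rcases hconjζ g with h1 | h1
      · have : (g * g) * ζ * (g * g)⁻¹ = g * (g * ζ * g⁻¹) * g⁻¹ := by group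
        rw [this, h1, h1]
      · have : (g * g) * ζ * (g * g)⁻¹ = g * (g * ζ * g⁻¹) * g⁻¹ := by group
        rw [this, h1]
        rw [show g * ζ⁻¹ * g⁻¹ = (g * ζ * g⁻¹)⁻¹ by group, h1, inv_inv]
    have := mul_inv_eq_iff_eq_mul.mp hfix
    exact this
  obtain ⟨p, q, hpq⟩ := hna
  have hp : p ≠ 1 := fun h => hpq (by rw [h, one_mul, mul_one])
  have hq : q ≠ 1 := fun h => hpq (by rw [h, one_mul, mul_one])
  have hpp : p * p ≠ 1 := fun h => hp (fg_torsionfree p 2 two_ne_zero (by rw [pow_two]; exact h))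
  have hqq : q * q ≠ 1 := fun h => hq (fg_torsionfree q 2 two_ne_zero (by rw [pow_two]; exact h))
  have hA : Commute (p * p) (q * q) := fg_centralizer_comm hζ1 (hsq p) (hsq q)
  have hB : Commute p (q * q) :=
    fg_centralizer_comm hpp ((Commute.refl p).mul_right (Commute.refl p)) hA.symm
  have hC : Commute p q :=
    fg_centralizer_comm hqq hB ((Commute.refl q).mul_right (Commute.refl q))
  exact hpq hC.eq

end FreeGroupFacts

lemma substHom_inl₀ {α V : Type*} (a : V → FreeGroup α) (x : FreeGroup α) :
    substHom a (Coprod.inl x) = x := Coprod.lift_apply_inl _ _ x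

open scoped commutatorElement in
lemma alg_union {α V : Type*} (hna : ∃ x y : FreeGroup α, x * y ≠ y * x)
    (S₁ S₂ : Set (Coprod (FreeGroup α) (FreeGroup V))) :
    ∃ S₃ : Set (Coprod (FreeGroup α) (FreeGroup V)),
      algSet S₃ = algSet S₁ ∪ algSet S₂ := by
  refine ⟨{w | ∃ w₁ ∈ S₁, ∃ w₂ ∈ S₂, ∃ g : FreeGroup α,
    w = ⁅w₁, Coprod.inl g * w₂ * (Coprod.inl g)⁻¹⁆}, ?_⟩
  ext a
  constructor
  · intro haS
    by_contra hun
    simp only [Set.mem_union, algSet, Set.mem_setOf_eq, not_or, not_forall] at hun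
    obtain ⟨⟨w₁, hw₁, hv₁⟩, ⟨w₂, hw₂, hv₂⟩⟩ := hun
    obtain ⟨g, hg⟩ := fg_no_zero_divisors hna hv₁ hv₂
    have hmem : ⁅w₁, Coprod.inl g * w₂ * (Coprod.inl g)⁻¹⁆ ∈
        {w | ∃ w₁ ∈ S₁, ∃ w₂ ∈ S₂, ∃ g : FreeGroup α,
          w = ⁅w₁, Coprod.inl g * w₂ * (Coprod.inl g)⁻¹⁆} :=
      ⟨w₁, hw₁, w₂, hw₂, g, rfl⟩
    have h1 := haS _ hmem
    rw [map_commutatorElement] at h1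
    have h2 := commutatorElement_eq_one_iff_commute.mp h1
    simp only [map_mul, map_inv, substHom_inl₀] at h2
    exact hg h2
  · rintro (h | h) w ⟨w₁, hw₁, w₂, hw₂, g, rfl⟩
    · rw [map_commutatorElement]
      apply commutatorElement_eq_one_iff_commute.mpr
      rw [h w₁ hw₁]
      exact Commute.one_left _
    · rw [map_commutatorElement]
      apply commutatorElement_eq_one_iff_commute.mpr
      simp only [map_mul, map_inv, h w₂ hw₂, mul_one]
      simpa using Commute.one_right (substHom a w₁)

lemma alg_empty {α V : Type*} (hna : ∃ x y : FreeGroup α, x * y ≠ y * x) :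
    ∃ S : Set (Coprod (FreeGroup α) (FreeGroup V)), algSet S = ∅ := by
  obtain ⟨p, q, hpq⟩ := hna
  refine ⟨{Coprod.inl (p * q * (q * p)⁻¹)}, ?_⟩
  ext a
  simp only [algSet, Set.mem_setOf_eq, Set.mem_singleton_iff, Set.mem_empty_iff_false,
    iff_false, not_forall]
  refine ⟨_, rfl, ?_⟩
  rw [substHom_inl₀]
  intro h
  exact hpq (by rwa [mul_inv_eq_one] at h)

lemma alg_biUnion {α V : Type*} (hna : ∃ x y : FreeGroup α, x * y ≠ y * x)
    {ι : Type*} [DecidableEq ι] (u : Finset ι)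
    (W : ι → Set (Coprod (FreeGroup α) (FreeGroup V))) :
    ∃ S' : Set (Coprod (FreeGroup α) (FreeGroup V)),
      algSet S' = ⋃ j ∈ u, algSet (W j) := by
  induction u using Finset.induction_on with
  | empty => simpa using alg_empty hna
  | @insert j u hj ih =>
      obtain ⟨S', hS'⟩ := ih
      obtain ⟨S'', hS''⟩ := alg_union hna (W j) S'
      refine ⟨S'', ?_⟩
      rw [hS'', hS']
      simp [Finset.set_biUnion_insert]

lemma substHom_inl' {α V : Type*} (a : V → FreeGroup α) (x : FreeGroup α) :
    substHom a (Coprod.inl x) = x := Coprod.lift_apply_inl _ _ x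

lemma mem_radical {α V : Type*} {S : Set (Coprod (FreeGroup α) (FreeGroup V))}
    {T : Coprod (FreeGroup α) (FreeGroup V)} :
    T ∈ radical S ↔ ∀ a ∈ algSet S, substHom a T = 1 := Iff.rfl

-- an irreducible algebraic set is not covered by finitely many proper algebraic subsets
lemma irr_not_cover {α V : Type*} (hna : ∃ x y : FreeGroup α, x * y ≠ y * x)
    {S : Set (Coprod (FreeGroup α) (FreeGroup V))}
    (hirr : IsIrreducibleAlgSet (algSet S))
    {ι : Type*} [DecidableEq ι] (u : Finset ι)
    (W : ι → Set (Coprod (FreeGroup α) (FreeGroup V)))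
    (hprop : ∀ j ∈ u, algSet (W j) ⊂ algSet S) :
    ¬ (algSet S ⊆ ⋃ j ∈ u, algSet (W j)) := by
  induction u using Finset.induction_on with
  | empty =>
      intro hsub
      obtain ⟨a, ha⟩ := hirr.1
      simpa using hsub ha
  | @insert j u hj ih =>
      intro hsub
      obtain ⟨S₂, hS₂⟩ := alg_biUnion hna u W
      have hU : algSet S₂ ⊆ algSet S := by
        rw [hS₂]
        refine Set.iUnion₂_subset fun k hk => (hprop k (Finset.mem_insert_of_mem hk)).1
      by_cases hc : algSet S₂ = algSet S
      · refine ih (fun k hk => hprop k (Finset.mem_insert_of_mem hk)) ?_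
        rw [← hS₂, hc]
      · refine hirr.2 ⟨W j, S₂, hprop j (Finset.mem_insert_self j u),
          ⟨hU, fun h => hc (le_antisymm hU h)⟩, ?_⟩
        apply Set.Subset.antisymm
        · intro a ha
          have := hsub ha
          simp only [Finset.set_biUnion_insert] at this
          rcases this with h | h
          · exact Or.inl h
          · exact Or.inr (by rwa [hS₂])
        · exact Set.union_subset (hprop j (Finset.mem_insert_self j u)).1 hU


/-- Let `F` be a non-abelian free group and `G` a finitely generated `F`-group.  Then
`G` is `F`-isomorphic to the coordinate group `F_{R(S)}` of a non-empty irreducible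
algebraic set over `F` if and only if `G` is freely `F`-discriminated by `F`. -/
theorem coordinate_group_of_irreducible_iff_freely_discriminated
    (α : Type) (hna : ∃ x y : FreeGroup α, x * y ≠ y * x)
    (G : Type) [Group G] (i : FreeGroup α →* G) (hi : Function.Injective i)
    (hfg : ∃ s : Finset G, Subgroup.closure (↑s ∪ Set.range i) = ⊤) :
    (∃ (n : ℕ) (S : Set (Coprod (FreeGroup α) (FreeGroup (Fin n)))),
        IsIrreducibleAlgSet (algSet S) ∧
        ∃ ψ : G ≃* (Coprod (FreeGroup α) (FreeGroup (Fin n)) ⧸ radical S),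
          ∀ x : FreeGroup α, ψ (i x) = QuotientGroup.mk (Coprod.inl x)) ↔
    (∀ (m : ℕ) (g : Fin m → G), (∀ j, g j ≠ 1) →
        ∃ φ : G →* FreeGroup α, (∀ x : FreeGroup α, φ (i x) = x) ∧
          ∀ j, φ (g j) ≠ 1) := by
  constructor
  · rintro ⟨n, S, hirr, ψ, hψ⟩ m g hg
    -- choose representatives
    have hrep : ∀ j, ∃ T, (QuotientGroup.mk T :
        Coprod (FreeGroup α) (FreeGroup (Fin n)) ⧸ radical S) = ψ (g j) :=
      fun j => QuotientGroup.mk_surjective (ψ (g j))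
    choose T hT using hrep
    have hTrad : ∀ j, T j ∉ radical S := by
      intro j hmem
      apply hg j
      apply ψ.injective
      rw [← hT j, map_one]
      exact (QuotientGroup.eq_one_iff (T j)).mpr hmem
    have hclaim : ∃ a ∈ algSet S, ∀ j, substHom a (T j) ≠ 1 := by
      by_contra hno
      push_neg at hno
      refine irr_not_cover hna hirr Finset.univ (fun j => S ∪ {T j}) ?_ ?_
      · intro j _
        constructor
        · intro a ha w hw
          exact ha w (Set.mem_union_left _ hw)
        · intro hle
          obtain ⟨a₀, ha₀⟩ := not_forall.mp ((mem_radical).not.mp (hTrad j))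
          obtain ⟨ha₀S, ha₀T⟩ := _root_.not_imp.mp ha₀
          exact ha₀T (hle ha₀S _ (Set.mem_union_right _ rfl))
      · intro a ha
        obtain ⟨j, hj⟩ := hno a ha
        refine Set.mem_biUnion (Finset.mem_univ j) ?_
        intro w hw
        rcases hw with hw | hw
        · exact ha w hw
        · rw [hw]; exact hj
    obtain ⟨a, haS, haT⟩ := hclaim
    have hkill : radical S ≤ (substHom a).ker := fun x hx => hx a haS
    refine ⟨(QuotientGroup.lift (radical S) (substHom a) hkill).comp ψ.toMonoidHom, ?_, ?_⟩
    · intro x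
      simp only [MonoidHom.comp_apply, MulEquiv.coe_toMonoidHom, hψ x]
      rw [QuotientGroup.lift_mk']
      exact substHom_inl' a x
    · intro j
      simp only [MonoidHom.comp_apply, MulEquiv.coe_toMonoidHom, ← hT j]
      rw [QuotientGroup.lift_mk']
      exact haT j
  · intro hdisc
    obtain ⟨s, hs⟩ := hfg
    set n := s.card with hn
    set e : Fin n → G := fun j => s.toList.get (Fin.cast (by simp [hn]) j) with he
    have hes : ∀ x ∈ s, ∃ j, e j = x := by
      intro x hx
      rw [← Finset.mem_toList] at hx
      obtain ⟨k, hk⟩ := List.mem_iff_get.mp hx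
      exact ⟨Fin.cast (by simp [hn]) k, hk⟩
    set π : Coprod (FreeGroup α) (FreeGroup (Fin n)) →* G :=
      Coprod.lift i (FreeGroup.lift e) with hπ
    have hπinl : ∀ x, π (Coprod.inl x) = i x := fun x => Coprod.lift_apply_inl _ _ x
    have hπsurj : Function.Surjective π := by
      have hrange : Subgroup.closure ((↑s : Set G) ∪ Set.range i) ≤ π.range := by
        apply Subgroup.closure_le _ |>.mpr
        rintro x (hx | ⟨y, rfl⟩)
        · obtain ⟨j, hj⟩ := hes x hx
          exact ⟨Coprod.inr (FreeGroup.of j), by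
            simp [hπ, Coprod.lift_apply_inr, FreeGroup.lift_apply_of, hj]⟩
        · exact ⟨Coprod.inl y, hπinl y⟩
      intro x
      have hx : x ∈ Subgroup.closure ((↑s : Set G) ∪ Set.range i) := hs ▸ Subgroup.mem_top x
      exact hrange hx
    -- substitution along a retraction factors through π
    have key : ∀ φ : G →* FreeGroup α, (∀ x, φ (i x) = x) →
        substHom (fun j => φ (e j)) = φ.comp π := by
      intro φ hφ
      apply Coprod.hom_ext
      · apply MonoidHom.ext
        intro x
        simp only [MonoidHom.comp_apply]
        rw [substHom_inl', hπinl, hφ]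
      · apply FreeGroup.ext_hom
        intro j
        simp only [MonoidHom.comp_apply]
        simp [substHom, hπ, Coprod.lift_apply_inr, FreeGroup.lift_apply_of]
    have keyA : ∀ φ : G →* FreeGroup α, (∀ x, φ (i x) = x) →
        (fun j => φ (e j)) ∈ algSet (↑π.ker : Set (Coprod (FreeGroup α) (FreeGroup (Fin n)))) := by
      intro φ hφ w hw
      rw [key φ hφ]
      simp only [MonoidHom.comp_apply]
      rw [MonoidHom.mem_ker.mp hw, map_one]
    have hrad : radical (↑π.ker : Set (Coprod (FreeGroup α) (FreeGroup (Fin n)))) = π.ker := by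
      apply le_antisymm
      · intro T hT
        by_contra hTk
        have hπT : π T ≠ 1 := fun h => hTk (MonoidHom.mem_ker.mpr h)
        obtain ⟨φ, hφ, hφT⟩ := hdisc 1 (fun _ => π T) (fun _ => hπT)
        have h1 := hT _ (keyA φ hφ)
        rw [key φ hφ] at h1
        exact hφT 0 h1
      · intro T hT a ha
        exact ha T hT
    have hne : (algSet (↑π.ker : Set (Coprod (FreeGroup α) (FreeGroup (Fin n))))).Nonempty := by
      obtain ⟨φ, hφ, -⟩ := hdisc 0 Fin.elim0 (fun j => j.elim0)
      exact ⟨_, keyA φ hφ⟩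
    have hirr : IsIrreducibleAlgSet
        (algSet (↑π.ker : Set (Coprod (FreeGroup α) (FreeGroup (Fin n))))) := by
      refine ⟨hne, ?_⟩
      rintro ⟨S₁, S₂, h1, h2, heq⟩
      obtain ⟨a₁, ha₁K, ha₁⟩ := Set.exists_of_ssubset h1
      obtain ⟨a₂, ha₂K, ha₂⟩ := Set.exists_of_ssubset h2
      obtain ⟨w₁, hw₁⟩ := not_forall.mp ha₁
      obtain ⟨hw₁S, hw₁v⟩ := _root_.not_imp.mp hw₁
      obtain ⟨w₂, hw₂⟩ := not_forall.mp ha₂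
      obtain ⟨hw₂S, hw₂v⟩ := _root_.not_imp.mp hw₂
      have hg₁ : π w₁ ≠ 1 := fun h => hw₁v (ha₁K w₁ (MonoidHom.mem_ker.mpr h))
      have hg₂ : π w₂ ≠ 1 := fun h => hw₂v (ha₂K w₂ (MonoidHom.mem_ker.mpr h))
      obtain ⟨φ, hφ, hφj⟩ := hdisc 2 ![π w₁, π w₂]
        (fun j => by fin_cases j <;> simpa)
      have haK := keyA φ hφ
      have hsplit := heq ▸ haK
      rcases hsplit with h | h
      · have := h w₁ hw₁S
        rw [key φ hφ] at this
        exact hφj 0 (by simpa using this)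
      · have := h w₂ hw₂S
        rw [key φ hφ] at this
        exact hφj 1 (by simpa using this)
    refine ⟨n, ↑π.ker, hirr, ?_⟩
    have hqe : ∀ w, (QuotientGroup.quotientKerEquivOfSurjective π hπsurj)
        (QuotientGroup.mk w) = π w := fun w => QuotientGroup.kerLift_mk π w
    refine ⟨((QuotientGroup.quotientKerEquivOfSurjective π hπsurj).symm).trans
      (QuotientGroup.quotientMulEquivOfEq hrad.symm), ?_⟩
    intro x
    simp only [MulEquiv.trans_apply]
    have h1 : (QuotientGroup.quotientKerEquivOfSurjective π hπsurj).symm (i x)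
        = QuotientGroup.mk (Coprod.inl x) := by
      apply (MulEquiv.symm_apply_eq _).mpr
      rw [hqe, hπinl]
    rw [h1, QuotientGroup.quotientMulEquivOfEq_mk]
end

section
/- Let F be a non-abelian free group, let b ∈ F be a nontrivial element, and set d = b². Then the radical R({x²d}) of the equation x²d = 1 in F ∗ F(x) equals the normal closure of the single element xb. -/
set_option linter.unusedSectionVars false
namespace SqAux
open FreeGroup List

variable {α : Type*} [DecidableEq α]

/-- non-cancelling adjacency for letters in a free group word -/
def R : (α × Bool) → (α × Bool) → Prop := fun a b => ¬(a.1 = b.1 ∧ a.2 = !b.2)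

lemma chain'_reduce (L : List (α × Bool)) : List.Chain' R (reduce L) := by
  induction L with
  | nil => exact List.isChain_nil
  | cons x L ih =>
    rw [reduce.cons]
    rcases h : reduce L with _ | ⟨hd, tl⟩
    · exact List.isChain_singleton _
    · rw [h] at ih
      dsimp only
      split_ifs with hc
      · exact ih.tail
      · exact List.isChain_cons_cons.2 ⟨hc, ih⟩

lemma reduce_eq_self {L : List (α × Bool)} (h : List.Chain' R L) : reduce L = L := by
  induction L with
  | nil => rfl
  | cons x L ih =>
    rw [reduce.cons, ih h.tail]
    rcases L with _ | ⟨hd, tl⟩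
    · rfl
    · dsimp only
      rw [if_neg (List.isChain_cons_cons.1 h).1]

lemma chain'_toWord (x : FreeGroup α) : List.Chain' R x.toWord := by
  rw [← reduce_toWord]; exact chain'_reduce _

/-- cyclically-reduced-ness condition -/
def CR (v : List (α × Bool)) : Prop :=
  ∀ l h, v.getLast? = some l → v.head? = some h → R l h

lemma invRev_cons (x : α × Bool) (L : List (α × Bool)) :
    invRev (x :: L) = invRev L ++ [(x.1, !x.2)] := by
  simp [invRev]

lemma invRev_append (L M : List (α × Bool)) :
    invRev (L ++ M) = invRev M ++ invRev L := by
  simp [invRev]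

lemma head?_invRev (L : List (α × Bool)) :
    (invRev L).head? = L.getLast?.map (fun g => (g.1, !g.2)) := by
  simp [invRev, List.head?_reverse, List.getLast?_map]

/-- Existence of a cyclic-reduction decomposition of a reduced word. -/
lemma decomp : ∀ (n : ℕ) (w : List (α × Bool)), w.length ≤ n → List.Chain' R w →
    ∃ u v, w = u ++ v ++ invRev u ∧ List.Chain' R v ∧ CR v := by
  intro n
  induction n with
  | zero =>
    intro w hw _
    refine ⟨[], [], ?_, List.isChain_nil, by simp [CR]⟩
    simpa using List.length_eq_zero_iff.1 (Nat.le_zero.1 hw)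
  | succ n ih =>
    intro w hw hch
    by_cases hcr : CR w
    · exact ⟨[], w, by simp [invRev], hch, hcr⟩
    · simp only [CR, not_forall] at hcr
      obtain ⟨l, hd0, hl, hh, hR⟩ := hcr
      rw [R, not_not] at hR
      rcases w with _ | ⟨h', w'⟩
      · simp at hh
      · have hh' : h' = hd0 := by simpa using hh
        subst hh'
        rcases w' with _ | ⟨y, w''⟩
        · -- singleton: l = hd0, contradiction with hR
          simp at hl
          subst hl
          simp at hR
        · -- write y :: w'' = m ++ [l]
          set m := (y :: w'').dropLast with hm
          have hsplit : y :: w'' = m ++ [l] := by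
            refine (List.dropLast_append_getLast? (l := y :: w'') l ?_).symm
            rw [List.getLast?_cons_cons] at hl
            exact hl
          have hchm : List.Chain' R m := by
            have hc2 : List.Chain' R (h' :: (m ++ [l])) := by rw [← hsplit]; exact hch
            exact ((List.isChain_append.1 hc2.tail).1)
          have hlen : m.length ≤ n := by
            have h3 := hw
            simp only [hsplit] at h3
            simp at h3
            omega
          obtain ⟨u', v, he, hchv, hcrv⟩ := ih m hlen hchm
          refine ⟨h' :: u', v, ?_, hchv, hcrv⟩
          have hl' : l = (h'.1, !h'.2) := by
            rcases l with ⟨l1, l2⟩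
            obtain ⟨hR1, hR2⟩ := hR
            simp only at hR1 hR2
            simp [hR1, hR2]
          rw [invRev_cons]
          have h4 : h' :: (y :: w'') = h' :: (m ++ [l]) := by rw [← hsplit]
          rw [h4, he, hl']
          simp

lemma mk_decomp {x : FreeGroup α} {u v : List (α × Bool)}
    (hw : x.toWord = u ++ v ++ invRev u) : x = mk u * mk v * (mk u)⁻¹ := by
  rw [inv_mk, mul_mk, mul_mk, ← hw, mk_toWord]

lemma sq_toWord {x : FreeGroup α} {u v : List (α × Bool)}
    (hw : x.toWord = u ++ v ++ invRev u) (hcr : CR v) :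
    (x^2).toWord = u ++ (v ++ v) ++ invRev u := by
  have hch : List.Chain' R (u ++ v ++ invRev u) := hw ▸ chain'_toWord x
  have hx := mk_decomp hw
  have hx2 : x^2 = mk (u ++ (v ++ v) ++ invRev u) := by
    have : x^2 = mk u * (mk v * mk v) * (mk u)⁻¹ := by
      rw [hx, pow_two]; group
    rw [this, inv_mk, mul_mk, mul_mk, mul_mk]
  rcases hvv : v with _ | ⟨a0, v'⟩
  · -- v empty: x = 1 and u = []
    subst hvv
    have hx1 : x = 1 := by
      have hmknil : (mk ([] : List (α × Bool)) : FreeGroup α) = 1 := rfl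
      rw [hx, hmknil, mul_one, mul_inv_cancel]
    have hu : u = [] := by
      have h0 : x.toWord = [] := by rw [hx1, toWord_one]
      rw [hw] at h0
      have := congrArg List.length h0
      simp [invRev_length] at this
      simpa using this
    rw [hx1, hu]
    simp [invRev]
  · subst hvv
    set v := a0 :: v' with hv
    obtain ⟨lv, hlv⟩ : ∃ lv, v.getLast? = some lv := by
      rcases hl : v.getLast? with _ | lv
      · rw [List.getLast?_eq_none_iff] at hl; simp [hv] at hl
      · exact ⟨lv, rfl⟩
    have hhd : v.head? = some a0 := rfl
    have e : (u ++ v).getLast? = some lv := by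
      rw [List.getLast?_append, hlv]; rfl
    obtain ⟨hch1, hch2, hch3⟩ := List.isChain_append.1 hch
    obtain ⟨hchu, hchv, hchj⟩ := List.isChain_append.1 hch1
    have hassoc : u ++ (v ++ v) ++ invRev u = (u ++ v) ++ (v ++ invRev u) := by
      simp [List.append_assoc]
    have hchsq : List.Chain' R ((u ++ v) ++ (v ++ invRev u)) := by
      apply List.isChain_append.2
      refine ⟨hch1, List.isChain_append.2 ⟨hchv, hch2, ?_⟩, ?_⟩
      · intro a ha b hb
        refine hch3 a ?_ b hb
        rw [e, Option.mem_def]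
        rw [hlv, Option.mem_def] at ha
        exact ha
      · intro a ha b hb
        rw [e, Option.mem_def, Option.some_inj] at ha
        rw [List.head?_append, hhd] at hb
        have hb' : a0 = b := by simpa using hb
        subst ha
        rw [← hb']
        exact hcr lv a0 hlv hhd
    rw [hx2, toWord_mk, hassoc, reduce_eq_self hchsq]

lemma list_key {u v p q : List (α × Bool)} (hlen : u.length ≤ p.length)
    (hcrv : CR v)
    (h : u ++ (v ++ v) ++ invRev u = p ++ (q ++ q) ++ invRev p) :
    u ++ v ++ invRev u = p ++ q ++ invRev p := by
  have hL := congrArg List.length h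
  simp [invRev_length] at hL
  have hhalf : u.length + v.length = p.length + q.length := by omega
  have h' : (u ++ v) ++ (v ++ invRev u) = (p ++ q) ++ (q ++ invRev p) := by
    simpa [List.append_assoc] using h
  obtain ⟨h1, h2⟩ := List.append_inj h' (by simp; omega)
  have hq_le : q.length ≤ v.length := by omega
  -- split v = q ++ s using h2
  set s := v.drop q.length with hs
  have hv2 : (v.take q.length ++ s) ++ invRev u = q ++ invRev p := by
    rw [List.take_append_drop]; exact h2
  rw [List.append_assoc] at hv2
  obtain ⟨ht1, ht2⟩ := List.append_inj hv2 (by simp; omega)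
  have hv1 : v = q ++ s := by rw [← ht1, List.take_append_drop]
  -- split p = u ++ t using h1
  set t := p.drop u.length with htdef
  have hp2 : u ++ v = p.take u.length ++ (t ++ q) := by
    rw [← List.append_assoc, List.take_append_drop]; exact h1
  obtain ⟨hu1, hvtq⟩ := List.append_inj hp2 (by simp; omega)
  have hp1 : p = u ++ t := by rw [hu1, List.take_append_drop]
  -- invRev t = s
  have hts : invRev t = s := by
    have : invRev t ++ invRev u = s ++ invRev u := by
      rw [← invRev_append, ← hp1, ht2]
    exact List.append_cancel_right this
  by_cases hse : s = []
  · -- s = [] : everything matches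
    have ht0 : t = [] := by
      have := congrArg List.length hts
      rw [invRev_length, hse] at this
      simpa using this
    rw [hp1, ht0, hv1, hse]
    simp
  · -- s nonempty : contradiction with CR v
    exfalso
    obtain ⟨ls, hls⟩ : ∃ ls, s.getLast? = some ls := by
      rcases hl : s.getLast? with _ | ls
      · rw [List.getLast?_eq_none_iff] at hl; exact absurd hl hse
      · exact ⟨ls, rfl⟩
    have hvlast : v.getLast? = some ls := by
      rw [hv1, List.getLast?_append, hls]; rfl
    have hvhead : v.head? = some (ls.1, !ls.2) := by
      have hvi : v = invRev s ++ q := by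
        rw [hvtq, ← hts, invRev_invRev]
      rw [hvi, List.head?_append, head?_invRev, hls]
      rfl
    have := hcrv ls (ls.1, !ls.2) hvlast hvhead
    rw [R] at this
    exact this ⟨rfl, by simp⟩

end SqAux

theorem FreeGroup.pow_two_injective {β : Type*} {a c : FreeGroup β} (h : a^2 = c^2) :
    a = c := by
  classical
  obtain ⟨u, v, hwa, hchv, hcrv⟩ :=
    SqAux.decomp a.toWord.length a.toWord le_rfl (SqAux.chain'_toWord a)
  obtain ⟨p, q, hwc, hchq, hcrq⟩ :=
    SqAux.decomp c.toWord.length c.toWord le_rfl (SqAux.chain'_toWord c)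
  have ha2 := SqAux.sq_toWord hwa hcrv
  have hc2 := SqAux.sq_toWord hwc hcrq
  have heq : u ++ (v ++ v) ++ FreeGroup.invRev u
      = p ++ (q ++ q) ++ FreeGroup.invRev p := by
    rw [← ha2, ← hc2, h]
  have : a.toWord = c.toWord := by
    rcases le_total u.length p.length with hle | hle
    · rw [hwa, hwc]
      exact SqAux.list_key hle hcrv heq
    · rw [hwa, hwc]
      exact (SqAux.list_key hle hcrq heq.symm).symm
  exact FreeGroup.toWord_injective this




open Monoid

/-- Over a non-abelian free group `F`, if `b ∈ F` is nontrivial and `d = b²`, then the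
radical of the one-variable equation `x²d = 1` is the normal closure of the single
element `xb`. -/
theorem radical_of_square_equation
    (α : Type) (hna : ∃ x y : FreeGroup α, x * y ≠ y * x)
    (b : FreeGroup α) (hb : b ≠ 1) :
    radical {(Coprod.inr (FreeGroup.of (0 : Fin 1)))^2 * Coprod.inl (b^2)} =
      Subgroup.normalClosure
        {Coprod.inr (FreeGroup.of (0 : Fin 1)) * Coprod.inl b} := by
  set G := Coprod (FreeGroup α) (FreeGroup (Fin 1)) with hG
  set xg : G := Coprod.inr (FreeGroup.of (0 : Fin 1)) with hxg
  set gen : G := xg * Coprod.inl b with hgen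
  set N := Subgroup.normalClosure {gen} with hN
  set a₀ : Fin 1 → FreeGroup α := fun _ => b⁻¹ with ha₀
  have hsubst_inr : ∀ (a : Fin 1 → FreeGroup α), substHom a xg = a 0 := by
    intro a
    rw [hxg]
    simp [substHom]
  have hsubst_inl : ∀ (a : Fin 1 → FreeGroup α) (g : FreeGroup α),
      substHom a (Coprod.inl g) = g := by
    intro a g
    simp [substHom]
  -- every solution is `a₀`
  have hsol : ∀ a ∈ algSet {xg^2 * Coprod.inl (b^2)}, a = a₀ := by
    intro a ha
    have h1 := ha _ (Set.mem_singleton _)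
    rw [map_mul, map_pow, hsubst_inr, hsubst_inl] at h1
    have h3 : (a 0)^2 = (b⁻¹)^2 := by
      rw [mul_eq_one_iff_eq_inv] at h1
      rw [h1]
      group
    have h4 : a 0 = b⁻¹ := FreeGroup.pow_two_injective h3
    funext i
    have : i = 0 := Subsingleton.elim i 0
    rw [this, h4, ha₀]
  -- `a₀` is a solution
  have ha₀sol : a₀ ∈ algSet {xg^2 * Coprod.inl (b^2)} := by
    intro w hw
    rw [Set.mem_singleton_iff] at hw
    rw [hw, map_mul, map_pow, hsubst_inr, hsubst_inl, ha₀]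
    group
  -- the quotient map factors through substitution by `a₀`
  have hgenN : gen ∈ N := Subgroup.subset_normalClosure (Set.mem_singleton _)
  have hgen1 : (QuotientGroup.mk' N) gen = 1 := (QuotientGroup.eq_one_iff _).2 hgenN
  set ψ : FreeGroup α →* G ⧸ N := (QuotientGroup.mk' N).comp Coprod.inl with hψ
  have hfactor : ψ.comp (substHom a₀) = QuotientGroup.mk' N := by
    apply Coprod.hom_ext
    · ext g
      simp [hψ, substHom]
    · apply FreeGroup.ext_hom
      intro i
      have hi : i = 0 := Subsingleton.elim i 0
      subst hi
      have hL : (ψ.comp (substHom a₀)).comp Coprod.inr (FreeGroup.of (0 : Fin 1))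
          = ψ b⁻¹ := by
        simp only [MonoidHom.comp_apply]
        rw [← hxg, hsubst_inr]
      rw [MonoidHom.comp_apply, MonoidHom.comp_apply, MonoidHom.comp_apply, ← hxg,
        hsubst_inr]
      have : (QuotientGroup.mk' N) xg * (QuotientGroup.mk' N) (Coprod.inl b) = 1 := by
        rw [← map_mul, ← hgen, hgen1]
      have hxgq : (QuotientGroup.mk' N) xg = (QuotientGroup.mk' N) (Coprod.inl b)⁻¹ :=
        mul_eq_one_iff_eq_inv.1 this
      calc (QuotientGroup.mk' N) (Coprod.inl (a₀ 0))
          = (QuotientGroup.mk' N) (Coprod.inl b)⁻¹ := by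
            rw [show a₀ 0 = b⁻¹ from rfl, map_inv, map_inv]
        _ = (QuotientGroup.mk' N) xg := hxgq.symm
        _ = ((QuotientGroup.mk' N).comp Coprod.inr) (FreeGroup.of (0 : Fin 1)) := by
            rw [hxg]; rfl
  -- conclude
  ext T
  constructor
  · intro hT
    have hT0 : substHom a₀ T = 1 := hT a₀ ha₀sol
    have : (QuotientGroup.mk' N) T = 1 := by
      rw [← hfactor, MonoidHom.comp_apply, hT0, map_one]
    exact (QuotientGroup.eq_one_iff _).1 this
  · intro hT a ha
    have haa : a = a₀ := hsol a ha
    subst haa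
    have hker : N ≤ (substHom a₀).ker := by
      apply Subgroup.normalClosure_le_normal
      intro w hw
      rw [Set.mem_singleton_iff] at hw
      subst hw
      rw [SetLike.mem_coe, MonoidHom.mem_ker, map_mul, hsubst_inr, hsubst_inl, ha₀]
      group
    exact hker hT
end

section
/- Let G be a non-abelian fully residually free group and let n ≥ 3. Then the standard quadratic equation [x₁,y₁][x₂,y₂]⋯[xₙ,yₙ] = 1 has a solution in G in general position: there exist elements x_1, y_1, …, x_n, y_n ∈ G such that ∏_{i=1}^n [x_i, y_i] = 1 and [[x_i, y_i],[x_{i+1}, y_{i+1}]] ≠ 1 for every i = 1, …, n−1. -/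
/-- The commutator `[x,y] = x⁻¹y⁻¹xy`. -/
def pcomm {M : Type*} [Group M] (x y : M) : M := x⁻¹ * y⁻¹ * x * y

namespace AuxFRF

lemma of_not_commute {S : Type} [DecidableEq S] {a b : S} (hab : a ≠ b) :
    ¬ Commute (FreeGroup.of a) (FreeGroup.of b) := by
  intro h
  have h2 := h.map (FreeGroup.lift
    (fun x => if x = a then (Equiv.swap 0 1 : Equiv.Perm (Fin 3)) else Equiv.swap 1 2))
  simp only [FreeGroup.lift_apply_of, if_neg hab.symm, eq_self_iff_true, if_true] at h2
  have h3 : Equiv.swap (0 : Fin 3) 1 * Equiv.swap 1 2 = Equiv.swap 1 2 * Equiv.swap 0 1 := h2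
  exact absurd h3 (by decide)

lemma fg_eq_one_of_isEmpty {S : Type} [IsEmpty S] (g : FreeGroup S) : g = 1 := by
  induction g using FreeGroup.induction_on with
  | C1 => rfl
  | of x => exact isEmptyElim x
  | inv_of x h => rw [h]; simp
  | mul x y hx hy => rw [hx, hy, one_mul]

lemma fg_pow_of_subsingleton {S : Type} [Subsingleton S] [Nonempty S] (g : FreeGroup S) :
    ∃ k : ℤ, g = FreeGroup.of (Classical.arbitrary S) ^ k := by
  induction g using FreeGroup.induction_on with
  | C1 => exact ⟨0, by simp⟩
  | of x =>
    obtain rfl : x = Classical.arbitrary S := Subsingleton.elim _ _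
    exact ⟨1, by rw [zpow_one]⟩
  | inv_of x h =>
    obtain ⟨k, hk⟩ := h
    exact ⟨-k, by rw [hk, ← zpow_neg]⟩
  | mul x y hx hy =>
    obtain ⟨k, hk⟩ := hx
    obtain ⟨l, hl⟩ := hy
    exact ⟨k + l, by rw [hk, hl, zpow_add]⟩

lemma fg_commute_of_subsingleton {S : Type} [Subsingleton S] (g h : FreeGroup S) :
    Commute g h := by
  rcases isEmpty_or_nonempty S with hS | hS
  · rw [fg_eq_one_of_isEmpty g]; exact Commute.one_left h
  · obtain ⟨k, hk⟩ := fg_pow_of_subsingleton g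
    obtain ⟨l, hl⟩ := fg_pow_of_subsingleton h
    rw [hk, hl]
    exact (Commute.refl _).zpow_zpow k l

end AuxFRF

namespace AuxFRF

lemma commute_exists_root {ι : Type} (x y : FreeGroup ι) (h : Commute x y) :
    ∃ z : FreeGroup ι, (∃ i : ℤ, x = z ^ i) ∧ (∃ j : ℤ, y = z ^ j) := by
  classical
  set K : Subgroup (FreeGroup ι) := Subgroup.closure {x, y} with hK
  have hxK : x ∈ K := Subgroup.subset_closure (Set.mem_insert _ _)
  have hyK : y ∈ K := Subgroup.subset_closure (Set.mem_insert_of_mem _ rfl)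
  -- K is abelian
  have habK : ∀ p q : K, Commute p q := by
    have main : ∀ g hg h' hh', Commute (⟨g, hg⟩ : K) (⟨h', hh'⟩ : K) := by
      intro g hg h' hh'
      have : ∀ (g h' : FreeGroup ι), g ∈ K → h' ∈ K → Commute g h' := by
        intro g h' hg hh'
        induction hg, hh' using Subgroup.closure_induction₂ with
        | mem u v hu hv =>
          rcases hu with rfl | hu <;> rcases hv with rfl | hv
          · exact Commute.refl _
          · rw [Set.mem_singleton_iff] at hv; subst hv; exact h
          · rw [Set.mem_singleton_iff] at hu; subst hu; exact h.symm
          · rw [Set.mem_singleton_iff] at hu hv; subst hu; subst hv; exact Commute.refl _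
        | one_left v hv => exact Commute.one_left _
        | one_right u hu => exact Commute.one_right _
        | mul_left u v w hu hv hw h1 h2 => exact h1.mul_left h2
        | mul_right u v w hu hv hw h1 h2 => exact h1.mul_right h2
        | inv_left u v hu hv h1 => exact h1.inv_left
        | inv_right u v hu hv h1 => exact h1.inv_right
      have := this g h' hg hh'
      exact Subtype.coe_injective.eq_iff.mp (by push_cast [this.eq]; rfl)
    intro p q
    have := main p.1 p.2 q.1 q.2
    simpa using this
  -- generators of K
  set S := IsFreeGroup.Generators K with hS
  set E : K ≃* FreeGroup S := IsFreeGroup.toFreeGroup K with hE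
  have hsub : Subsingleton S := by
    by_contra hns
    rw [not_subsingleton_iff_nontrivial] at hns
    obtain ⟨s1, s2, hss⟩ := exists_pair_ne S
    apply of_not_commute hss
    have := (habK (E.symm (FreeGroup.of s1)) (E.symm (FreeGroup.of s2))).map E.toMonoidHom
    simpa using this
  rcases isEmpty_or_nonempty S with hSe | hSn
  · refine ⟨1, ⟨0, ?_⟩, ⟨0, ?_⟩⟩
    · have h1 : E ⟨x, hxK⟩ = 1 := fg_eq_one_of_isEmpty _
      have := E.injective (h1.trans (map_one E).symm)
      rw [zpow_zero]
      exact congrArg Subtype.val this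
    · have h1 : E ⟨y, hyK⟩ = 1 := fg_eq_one_of_isEmpty _
      have := E.injective (h1.trans (map_one E).symm)
      rw [zpow_zero]
      exact congrArg Subtype.val this
  · set z0 : K := E.symm (FreeGroup.of (Classical.arbitrary S)) with hz0
    refine ⟨(z0 : FreeGroup ι), ?_, ?_⟩
    · obtain ⟨k, hk⟩ := fg_pow_of_subsingleton (E ⟨x, hxK⟩)
      refine ⟨k, ?_⟩
      have : (⟨x, hxK⟩ : K) = z0 ^ k := by
        apply E.injective
        rw [hk, map_zpow, hz0, E.apply_symm_apply]
      calc x = ((⟨x, hxK⟩ : K) : FreeGroup ι) := rfl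
        _ = ((z0 ^ k : K) : FreeGroup ι) := by rw [this]
        _ = (z0 : FreeGroup ι) ^ k := by push_cast; rfl
    · obtain ⟨k, hk⟩ := fg_pow_of_subsingleton (E ⟨y, hyK⟩)
      refine ⟨k, ?_⟩
      have : (⟨y, hyK⟩ : K) = z0 ^ k := by
        apply E.injective
        rw [hk, map_zpow, hz0, E.apply_symm_apply]
      calc y = ((⟨y, hyK⟩ : K) : FreeGroup ι) := rfl
        _ = ((z0 ^ k : K) : FreeGroup ι) := by rw [this]
        _ = (z0 : FreeGroup ι) ^ k := by push_cast; rfl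

end AuxFRF

namespace AuxFRF

lemma commute_conj {ι : Type} (u t : FreeGroup ι) (h : Commute u (t⁻¹ * u * t)) :
    Commute u t := by
  classical
  obtain ⟨z, ⟨i, hi⟩, ⟨j, hj⟩⟩ := commute_exists_root u (t⁻¹ * u * t) h
  by_cases hij : i = j
  · -- then t⁻¹ u t = u
    subst hij
    have h1 : t⁻¹ * u * t = u := by rw [hj, ← hi]
    have : u * t = t * (t⁻¹ * u * t) := by group
    rw [h1] at this
    exact this
  · set K : Subgroup (FreeGroup ι) := Subgroup.closure {z, t} with hK
    have hzK : z ∈ K := Subgroup.subset_closure (Set.mem_insert _ _)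
    have htK : t ∈ K := Subgroup.subset_closure (Set.mem_insert_of_mem _ rfl)
    set S := IsFreeGroup.Generators K with hS
    set E : K ≃* FreeGroup S := IsFreeGroup.toFreeGroup K with hE
    set φ : FreeGroup S →* Multiplicative (S →₀ ℤ) :=
      FreeGroup.lift (fun s => Multiplicative.ofAdd (Finsupp.single s 1)) with hφ
    set ψ : K →* Multiplicative (S →₀ ℤ) := φ.comp E.toMonoidHom with hψ
    set z' : K := ⟨z, hzK⟩ with hz'
    set t' : K := ⟨t, htK⟩ with ht'
    -- the relation in K
    have hrel : t'⁻¹ * z' ^ i * t' = z' ^ j := by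
      apply Subtype.coe_injective
      push_cast
      rw [← hi, hj]
    -- apply ψ
    have hrel2 : ψ z' ^ i = ψ z' ^ j := by
      have h2 := congrArg ψ hrel
      simp only [map_mul, map_inv, map_zpow] at h2
      calc ψ z' ^ i = (ψ t')⁻¹ * (ψ t' * ψ z' ^ i) := by group
        _ = (ψ t')⁻¹ * (ψ z' ^ i * ψ t') := by rw [mul_comm (ψ t') _]
        _ = (ψ t')⁻¹ * ψ z' ^ i * ψ t' := by group
        _ = ψ z' ^ j := h2
    have hv : Multiplicative.toAdd (ψ z') = 0 := by
      have h3 := congrArg Multiplicative.toAdd hrel2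
      rw [toAdd_zpow, toAdd_zpow] at h3
      ext s
      have h4 := congrArg (fun f => f s) h3
      simp only [Finsupp.smul_apply, smul_eq_mul] at h4
      have h5 : (i - j) * (Multiplicative.toAdd (ψ z')) s = 0 := by
        rw [sub_mul, h4, sub_self]
      rcases mul_eq_zero.mp h5 with h6 | h6
      · exact absurd (sub_eq_zero.mp h6) hij
      · simpa using h6
    have hψz : ψ z' = 1 := by
      have := congrArg Multiplicative.ofAdd hv
      rwa [ofAdd_toAdd, ofAdd_zero] at this
    -- surjectivity of φ
    have hsurj : ∀ f : S →₀ ℤ, ∃ g : FreeGroup S, φ g = Multiplicative.ofAdd f := by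
      intro f
      induction f using Finsupp.induction with
      | zero => exact ⟨1, by simp⟩
      | single_add a b f' ha hb ih =>
        obtain ⟨g, hg⟩ := ih
        refine ⟨FreeGroup.of a ^ b * g, ?_⟩
        rw [map_mul, map_zpow, hg, hφ]
        rw [FreeGroup.lift_apply_of]
        rw [← ofAdd_zsmul, ← ofAdd_add]
        congr 1
        rw [Finsupp.smul_single, smul_eq_mul, mul_one]
    -- every element of K maps to a power of ψ t'
    have hpow : ∀ g : K, ∃ k : ℤ, ψ g = ψ t' ^ k := by
      have main : ∀ w (hw : w ∈ K), ∃ k : ℤ, ψ ⟨w, hw⟩ = ψ t' ^ k := by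
        intro w0 hw0
        induction hw0 using Subgroup.closure_induction with
        | mem w hw =>
          rcases hw with rfl | hw
          · exact ⟨0, by rw [zpow_zero]; exact hψz⟩
          · rw [Set.mem_singleton_iff] at hw; subst hw
            exact ⟨1, by rw [zpow_one]⟩
        | one => exact ⟨0, by rw [zpow_zero]; exact map_one ψ⟩
        | mul w1 w2 h1 h2 ih1 ih2 =>
          obtain ⟨k1, hk1⟩ := ih1
          obtain ⟨k2, hk2⟩ := ih2
          refine ⟨k1 + k2, ?_⟩
          have : (⟨w1 * w2, Subgroup.mul_mem _ h1 h2⟩ : K) = ⟨w1, h1⟩ * ⟨w2, h2⟩ := rfl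
          rw [this, map_mul, hk1, hk2, zpow_add]
        | inv w hw ih =>
          obtain ⟨k, hk⟩ := ih
          refine ⟨-k, ?_⟩
          have : (⟨w⁻¹, Subgroup.inv_mem _ hw⟩ : K) = (⟨w, hw⟩ : K)⁻¹ := rfl
          rw [this, map_inv, hk, zpow_neg]
      exact fun g => main g.1 g.2
    -- hence every element of the target is a power of w := ψ t'
    have hpow2 : ∀ m : Multiplicative (S →₀ ℤ), ∃ k : ℤ, m = ψ t' ^ k := by
      intro m
      obtain ⟨g, hg⟩ := hsurj (Multiplicative.toAdd m)
      obtain ⟨k, hk⟩ := hpow (E.symm g)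
      refine ⟨k, ?_⟩
      have : ψ (E.symm g) = φ g := by
        rw [hψ]
        simp
      rw [← hk, this, hg, ofAdd_toAdd]
    -- Subsingleton S
    have hsub : Subsingleton S := by
      by_contra hns
      rw [not_subsingleton_iff_nontrivial] at hns
      obtain ⟨s1, s2, hss⟩ := exists_pair_ne S
      obtain ⟨k, hk⟩ := hpow2 (Multiplicative.ofAdd (Finsupp.single s1 1))
      obtain ⟨l, hl⟩ := hpow2 (Multiplicative.ofAdd (Finsupp.single s2 1))
      set f : S →₀ ℤ := Multiplicative.toAdd (ψ t') with hf
      have hk' : Finsupp.single s1 (1 : ℤ) = k • f := by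
        have := congrArg Multiplicative.toAdd hk
        rwa [toAdd_ofAdd, toAdd_zpow] at this
      have hl' : Finsupp.single s2 (1 : ℤ) = l • f := by
        have := congrArg Multiplicative.toAdd hl
        rwa [toAdd_ofAdd, toAdd_zpow] at this
      have e1 : (1 : ℤ) = k * f s1 := by
        have := congrArg (fun ff => ff s1) hk'
        simpa using this
      have e2 : (0 : ℤ) = l * f s1 := by
        have := congrArg (fun ff => ff s1) hl'
        simpa [Finsupp.single_eq_of_ne' hss.symm] using this
      have e3 : (1 : ℤ) = l * f s2 := by
        have := congrArg (fun ff => ff s2) hl'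
        simpa using this
      have hfs1 : f s1 ≠ 0 := by
        intro h0; rw [h0, mul_zero] at e1; exact one_ne_zero e1
      have hl0 : l = 0 := by
        rcases mul_eq_zero.mp e2.symm with h0 | h0
        · exact h0
        · exact absurd h0 hfs1
      rw [hl0, zero_mul] at e3
      exact one_ne_zero e3
    -- K abelian, so z and t commute
    have hzt : Commute z t := by
      have h1 : Commute (E z') (E t') := fg_commute_of_subsingleton _ _
      have h2 := h1.map E.symm.toMonoidHom
      simp only [MulEquiv.coe_toMonoidHom, MulEquiv.symm_apply_apply] at h2
      have := h2.map K.subtype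
      exact this
    rw [hi]
    exact hzt.zpow_left i

end AuxFRF

namespace AuxFRF

open scoped Classical

section KeyLemmas
variable {ι : Type}

lemma free_key (A B : FreeGroup ι) (hC : pcomm A B ≠ 1) :
    ¬ Commute (pcomm A B) (A⁻¹ * pcomm A B * A) := by
  intro h
  have h1 : Commute (pcomm A B) A := commute_conj _ _ h
  have h2 : Commute (B⁻¹ * A * B) A := by
    have hAC : A * pcomm A B = B⁻¹ * A * B := by unfold pcomm; group
    rw [← hAC]
    exact (Commute.refl A).mul_left h1
  have h3 : Commute A B := commute_conj A B h2.symm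
  apply hC
  unfold pcomm at *
  calc A⁻¹ * B⁻¹ * A * B = A⁻¹ * B⁻¹ * (A * B) := by group
    _ = A⁻¹ * B⁻¹ * (B * A) := by rw [h3.eq]
    _ = 1 := by group

lemma free_key2 (A B : FreeGroup ι) (hC : pcomm A B ≠ 1) :
    ¬ Commute (A⁻¹ * pcomm A (pcomm A B) * A) (pcomm A (pcomm A B)) := by
  intro h
  set C := pcomm A B with hCdef
  set E := pcomm A C with hEdef
  have h0 : Commute E (A⁻¹ * E * A) := h.symm
  have h1 : Commute E A := commute_conj _ _ h0
  have h2 : Commute (C⁻¹ * A * C) A := by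
    have hAE : A * E = C⁻¹ * A * C := by rw [hEdef]; unfold pcomm; group
    rw [← hAE]
    exact (Commute.refl A).mul_left h1
  have h3 : Commute A C := commute_conj A C h2.symm
  apply free_key A B hC
  have h4 : A⁻¹ * C * A = C := by
    calc A⁻¹ * C * A = A⁻¹ * (C * A) := by group
      _ = A⁻¹ * (A * C) := by rw [← h3.eq]
      _ = C := by group
  rw [show A⁻¹ * pcomm A B * A = A⁻¹ * C * A from rfl, h4]

end KeyLemmas

section GroupHelpers
variable {G : Type*} [Group G]

lemma commute_conj_iff (g u v : G) :
    Commute (g⁻¹ * u * g) (g⁻¹ * v * g) ↔ Commute u v := by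
  constructor
  · intro h
    have : u * v = v * u := by
      calc u * v = g * ((g⁻¹ * u * g) * (g⁻¹ * v * g)) * g⁻¹ := by group
        _ = g * ((g⁻¹ * v * g) * (g⁻¹ * u * g)) * g⁻¹ := by rw [h.eq]
        _ = v * u := by group
    exact this
  · intro h
    have : (g⁻¹ * u * g) * (g⁻¹ * v * g) = (g⁻¹ * v * g) * (g⁻¹ * u * g) := by
      calc (g⁻¹ * u * g) * (g⁻¹ * v * g) = g⁻¹ * (u * v) * g := by group
        _ = g⁻¹ * (v * u) * g := by rw [h.eq]
        _ = (g⁻¹ * v * g) * (g⁻¹ * u * g) := by group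
    exact this

lemma commute_mul_left_iff {u w : G} (h : Commute u w) (v : G) :
    Commute (u * v) w ↔ Commute v w := by
  constructor
  · intro h2
    have : u * (v * w) = u * (w * v) := by
      calc u * (v * w) = (u * v) * w := by group
        _ = w * (u * v) := h2.eq
        _ = (w * u) * v := by group
        _ = (u * w) * v := by rw [← h.eq]
        _ = u * (w * v) := by group
    exact mul_left_cancel this
  · intro h2
    exact h.mul_left h2

lemma commute_comm_iff (u v : G) : Commute u v ↔ Commute v u :=
  ⟨Commute.symm, Commute.symm⟩

end GroupHelpers

end AuxFRF

namespace AuxFRF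

section Seq
variable {G : Type*} [Group G] (a b c e : G)

def sq (k i : ℕ) : G :=
  if i = 0 then (a^k)⁻¹ * c * a^k
  else if i ≤ k then (a^(k-i))⁻¹ * e * a^(k-i)
  else if i = k+1 then a⁻¹ * c⁻¹ * a
  else a⁻¹ * c * a * c⁻¹

def tq (k i : ℕ) : G :=
  if i < k then (a^(k-1-i))⁻¹ * e * a^(k-1-i)
  else if i = k then a⁻¹ * c⁻¹ * a
  else a⁻¹ * c * a * c⁻¹

lemma sq_zero (k : ℕ) : sq a c e k 0 = (a^k)⁻¹ * c * a^k := by simp [sq]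

lemma sq_mid (k i : ℕ) (h1 : i ≠ 0) (h2 : i ≤ k) :
    sq a c e k i = (a^(k-i))⁻¹ * e * a^(k-i) := by simp [sq, h1, h2]

lemma sq_k1 (k : ℕ) : sq a c e k (k+1) = a⁻¹ * c⁻¹ * a := by
  simp [sq, Nat.not_succ_le_self]

lemma sq_k2 (k : ℕ) : sq a c e k (k+2) = a⁻¹ * c * a * c⁻¹ := by
  simp [sq, show ¬(k+2 ≤ k) by omega, show ¬(k+2 = k+1) by omega]

lemma sq_succ (k i : ℕ) : sq a c e k (i+1) = tq a c e k i := by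
  simp only [sq, tq]
  rw [if_neg (by omega : ¬(i + 1 = 0))]
  by_cases h : i < k
  · rw [if_pos h, if_pos (by omega : i + 1 ≤ k),
      show k - (i+1) = k - 1 - i by omega]
  · rw [if_neg h, if_neg (by omega : ¬(i + 1 ≤ k))]
    by_cases h2 : i = k
    · rw [if_pos h2, if_pos (by omega : i + 1 = k + 1)]
    · rw [if_neg h2, if_neg (by omega : ¬(i + 1 = k + 1))]

lemma tq_succ (k i : ℕ) : tq a c e (k+1) (i+1) = tq a c e k i := by
  simp only [tq]
  by_cases h : i < k
  · rw [if_pos h, if_pos (by omega : i + 1 < k + 1),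
      show k + 1 - 1 - (i+1) = k - 1 - i by omega]
  · rw [if_neg h, if_neg (by omega : ¬(i + 1 < k + 1))]
    by_cases h2 : i = k
    · rw [if_pos h2, if_pos (by omega : i + 1 = k + 1)]
    · rw [if_neg h2, if_neg (by omega : ¬(i + 1 = k + 1))]

lemma tq_prod (he : e = a⁻¹ * c⁻¹ * a * c) :
    ∀ k : ℕ, (List.ofFn (fun i : Fin (k+2) => tq a c e k i.val)).prod
      = (a^k)⁻¹ * c⁻¹ * a^k := by
  intro k
  induction k with
  | zero =>
    simp only [List.ofFn_succ, List.ofFn_zero, Fin.val_zero, Fin.val_succ, List.prod_cons,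
      List.prod_nil, mul_one, pow_zero]
    rw [show tq a c e 0 0 = a⁻¹ * c⁻¹ * a by
        simp [tq]]
    rw [show tq a c e 0 (0+1) = a⁻¹ * c * a * c⁻¹ by
        simp [tq]]
    group
  | succ k ih =>
    rw [List.ofFn_succ]
    have hshift : (fun i : Fin (k+2) => tq a c e (k+1) ((Fin.succ i).val))
        = fun i : Fin (k+2) => tq a c e k i.val := by
      funext i
      rw [Fin.val_succ, tq_succ]
    rw [List.prod_cons]
    have h0 : tq a c e (k+1) ((0 : Fin (k+3)).val) = (a^k)⁻¹ * e * a^k := by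
      rw [show ((0 : Fin (k+3)) : ℕ) = 0 from rfl]; simp only [tq]
      rw [if_pos (by omega : 0 < k + 1), show k + 1 - 1 - 0 = k by omega]
    rw [show (fun i : Fin (k+2) => tq a c e (k+1) (i.succ.val)) = fun i : Fin (k+2) => tq a c e k i.val from hshift] 
    rw [ih, h0, he, pow_succ]
    group

lemma sq_prod (he : e = a⁻¹ * c⁻¹ * a * c) (k : ℕ) :
    (List.ofFn (fun i : Fin (k+3) => sq a c e k i.val)).prod = 1 := by
  rw [List.ofFn_succ, List.prod_cons]
  have hshift : (fun i : Fin (k+2) => sq a c e k (i.succ.val))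
      = fun i : Fin (k+2) => tq a c e k i.val := by
    funext i
    rw [Fin.val_succ, sq_succ]
  rw [show (fun i : Fin (k+2) => sq a c e k (i.succ.val)) = fun i : Fin (k+2) => tq a c e k i.val from hshift]
  rw [tq_prod a c e he k]
  rw [show ((0 : Fin (k+3)) : ℕ) = 0 from rfl, sq_zero]
  group

end Seq

end AuxFRF

namespace AuxFRF

section XY
variable {G : Type*} [Group G] (a b c e : G)

def xfun (k i : ℕ) : G :=
  if i = 0 then (a^k)⁻¹ * a * a^k
  else if i ≤ k then (a^(k-i))⁻¹ * a * a^(k-i)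
  else if i = k+1 then a⁻¹ * b * a
  else a

def yfun (k i : ℕ) : G :=
  if i = 0 then (a^k)⁻¹ * b * a^k
  else if i ≤ k then (a^(k-i))⁻¹ * c * a^(k-i)
  else if i = k+1 then a
  else c⁻¹

lemma conj_split (u : G) (m : ℕ) :
    (a^(m+1))⁻¹ * u * a^(m+1) = (a^m)⁻¹ * (a⁻¹ * u * a) * a^m := by
  rw [pow_succ']
  group

lemma pcomm_xy (hcd : c = a⁻¹ * b⁻¹ * a * b) (hed : e = a⁻¹ * c⁻¹ * a * c) (k i : ℕ) :
    pcomm (xfun a b k i) (yfun a b c k i) = sq a c e k i := by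
  subst hed
  subst hcd
  by_cases h0 : i = 0
  · subst h0
    simp only [xfun, yfun, sq, eq_self_iff_true, if_true, pcomm]
    group
  · by_cases h1 : i ≤ k
    · simp only [xfun, yfun, sq, if_neg h0, if_pos h1, pcomm]
      group
    · by_cases h2 : i = k + 1
      · simp only [xfun, yfun, sq, if_neg h0, if_neg h1, if_pos h2, pcomm]
        group
      · simp only [xfun, yfun, sq, if_neg h0, if_neg h1, if_neg h2, pcomm]
        group

end XY

end AuxFRF

/-- In a non-abelian fully residually free group `G`, for every `n ≥ 3` the standard
quadratic equation `[x₁,y₁]⋯[xₙ,yₙ] = 1` has a solution in general position: a solution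
for which consecutive commutators `[xᵢ,yᵢ]` and `[xᵢ₊₁,yᵢ₊₁]` do not commute. -/
theorem standard_orientable_quadratic_has_solution_in_general_position
    (G : Type*) [Group G] (hna : ∃ x y : G, x * y ≠ y * x)
    (hG : FullyResiduallyFree G) (n : ℕ) (hn : 3 ≤ n) :
    ∃ x y : Fin n → G,
      (List.ofFn fun i => pcomm (x i) (y i)).prod = 1 ∧
      ∀ (i : ℕ) (hi : i + 1 < n),
        ¬ Commute (pcomm (x ⟨i, by omega⟩) (y ⟨i, by omega⟩))
            (pcomm (x ⟨i + 1, hi⟩) (y ⟨i + 1, hi⟩)) := by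
  classical
  obtain ⟨a, b, hab⟩ := hna
  set c : G := pcomm a b with hc_def
  have hcd : c = a⁻¹ * b⁻¹ * a * b := rfl
  have hc : c ≠ 1 := by
    intro h1
    apply hab
    have h2 : a * b = b * a * (a⁻¹ * b⁻¹ * a * b) := by group
    rw [← hcd, h1, mul_one] at h2
    exact h2
  set e : G := pcomm a c with he_def
  have hed : e = a⁻¹ * c⁻¹ * a * c := rfl
  -- Key fact 1
  have K1 : ¬ Commute c (a⁻¹ * c * a) := by
    intro h
    obtain ⟨ι, φ, hφ⟩ := hG 1 (fun _ => c) (fun _ => hc)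
    have hφc : φ c ≠ 1 := hφ 0
    have hmap : φ c = pcomm (φ a) (φ b) := by
      rw [hcd]; simp [pcomm, map_mul, map_inv]
    have h2 := h.map φ
    have h3 : φ (a⁻¹ * c * a) = (φ a)⁻¹ * φ c * φ a := by
      simp [map_mul, map_inv]
    rw [h3, hmap] at h2
    exact AuxFRF.free_key (φ a) (φ b) (by rw [← hmap]; exact hφc) h2
  -- Key fact 2
  have K2 : ¬ Commute (a⁻¹ * e * a) e := by
    intro h
    obtain ⟨ι, φ, hφ⟩ := hG 1 (fun _ => c) (fun _ => hc)
    have hφc : φ c ≠ 1 := hφ 0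
    have hmap : φ c = pcomm (φ a) (φ b) := by
      rw [hcd]; simp [pcomm, map_mul, map_inv]
    have hmape : φ e = pcomm (φ a) (pcomm (φ a) (φ b)) := by
      rw [hed, ← hmap]
      simp [pcomm, map_mul, map_inv]
    have h2 := h.map φ
    have h3 : φ (a⁻¹ * e * a) = (φ a)⁻¹ * φ e * φ a := by
      simp [map_mul, map_inv]
    rw [h3, hmape] at h2
    exact AuxFRF.free_key2 (φ a) (φ b) (by rw [← hmap]; exact hφc) h2
  obtain ⟨k, rfl⟩ : ∃ k, n = k + 3 := ⟨n - 3, by omega⟩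
  refine ⟨fun i => AuxFRF.xfun a b k i.val, fun i => AuxFRF.yfun a b c k i.val, ?_, ?_⟩
  · have hfn : (fun i : Fin (k+3) => pcomm (AuxFRF.xfun a b k i.val) (AuxFRF.yfun a b c k i.val))
        = fun i : Fin (k+3) => AuxFRF.sq a c e k i.val :=
      funext fun i => AuxFRF.pcomm_xy a b c e hcd hed k i.val
    rw [hfn]
    exact AuxFRF.sq_prod a c e hed k
  · intro i hi
    rw [AuxFRF.pcomm_xy a b c e hcd hed k i, AuxFRF.pcomm_xy a b c e hcd hed k (i+1)]
    intro hcomm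
    by_cases hi0 : i = 0
    · subst hi0
      rw [AuxFRF.sq_zero] at hcomm
      by_cases hk0 : k = 0
      · subst hk0
        rw [show (0+1 : ℕ) = 0 + 1 from rfl, AuxFRF.sq_k1 a c e 0] at hcomm
        simp only [pow_zero, inv_one, one_mul, mul_one] at hcomm
        rw [show a⁻¹ * c⁻¹ * a = (a⁻¹ * c * a)⁻¹ by group] at hcomm
        exact K1 (Commute.inv_right_iff.mp hcomm)
      · obtain ⟨m, rfl⟩ : ∃ m, k = m + 1 := ⟨k - 1, by omega⟩
        rw [AuxFRF.sq_mid a c e (m+1) 1 one_ne_zero (by omega),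
          show m + 1 - 1 = m from rfl, AuxFRF.conj_split a c m] at hcomm
        have h4 := (AuxFRF.commute_conj_iff (a^m) _ _).mp hcomm
        rw [show e = (a⁻¹ * c * a)⁻¹ * c by rw [hed]; group] at h4
        have h5 := h4.symm
        have h6 := (AuxFRF.commute_mul_left_iff ((Commute.refl (a⁻¹*c*a)).inv_left) c).mp h5
        exact K1 h6
    · by_cases hik : i + 1 ≤ k
      · obtain ⟨j, hj⟩ : ∃ j, k - i = j + 1 := ⟨k - i - 1, by omega⟩
        have hj2 : k - (i+1) = j := by omega
        rw [AuxFRF.sq_mid a c e k i hi0 (by omega),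
          AuxFRF.sq_mid a c e k (i+1) (by omega) hik, hj, hj2,
          AuxFRF.conj_split a e j] at hcomm
        have h4 := (AuxFRF.commute_conj_iff (a^j) _ _).mp hcomm
        exact K2 h4
      · by_cases hik2 : i ≤ k
        · have hik3 : i = k := by omega
          subst hik3
          rw [AuxFRF.sq_mid a c e i i hi0 le_rfl, AuxFRF.sq_k1] at hcomm
          simp only [Nat.sub_self, pow_zero, inv_one, one_mul, mul_one] at hcomm
          rw [show a⁻¹ * c⁻¹ * a = (a⁻¹ * c * a)⁻¹ by group,
            show e = (a⁻¹ * c * a)⁻¹ * c by rw [hed]; group] at hcomm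
          have h5 := (AuxFRF.commute_mul_left_iff
            ((Commute.refl (a⁻¹*c*a)).inv_left.inv_right) c).mp hcomm
          exact K1 (Commute.inv_right_iff.mp h5)
        · have hik3 : i = k + 1 := by omega
          subst hik3
          rw [AuxFRF.sq_k1, show k + 1 + 1 = k + 2 from rfl, AuxFRF.sq_k2] at hcomm
          rw [show a⁻¹ * c⁻¹ * a = (a⁻¹ * c * a)⁻¹ by group,
            show a⁻¹ * c * a * c⁻¹ = (a⁻¹ * c * a) * c⁻¹ by group] at hcomm
          have h5 := (Commute.inv_left_iff.mp hcomm).symm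
          have h6 := (AuxFRF.commute_mul_left_iff (Commute.refl (a⁻¹*c*a)) c⁻¹).mp h5
          exact K1 (Commute.inv_left_iff.mp h6)
end
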